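/- arXiv:2601.17575 — 7 statements merged into one kernel-verified Lean document; each statement's English description precedes it below -/
import Mathlib

section
/- Let r ≥ 2, let G=(V,E) be a finite simple graph containing no copy of the complete graph K_{r+1} as a subgraph (i.e., no r+1 pairwise adjacent vertices), and let 1 ≤ k ≤ |V|. Then ε_k(G) ≤ (1 − 1/r)·k²/2 + (4k−2)·√k. -/
open Finset

/-- The sum of the `k` largest values of `ev` (with multiplicity), expressed as the
supremum over all `k`-element index subsets of the sum of the corresponding values. -/
noncomputable def sumKLargest {n : Type*} [Fintype n] (ev : n → ℝ) (k : ℕ) : ℝ :=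
  sSup {x : ℝ | ∃ s : Finset n, s.card = k ∧ x = ∑ i ∈ s, ev i}

/-- `ε_k(G) = λ_1(L(G)) + ⋯ + λ_k(L(G)) - |E(G)|`, where
`λ_1 ≥ λ_2 ≥ ⋯` are the eigenvalues of the Laplacian matrix of `G`. -/
noncomputable def epsK {V : Type*} [Fintype V] [DecidableEq V] (G : SimpleGraph V)
    [DecidableRel G.Adj] (k : ℕ) : ℝ :=
  sumKLargest (SimpleGraph.posSemidef_lapMatrix ℝ G).isHermitian.eigenvalues k
    - G.edgeFinset.card

open Matrix

/-!
Fix `k` eigenvectors of `L = L(G)` and let `P` be the orthogonal projection onto their span, so that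
the sum of their eigenvalues is `tr (L P)` and `tr P = k`. Expanding the trace over the edges,
`2 (tr (L P) - |E|) = ∑_{u ~ v} (P_uu + P_vv - 2 P_uv - 1)`, summed over ordered adjacent pairs.
Since `P² = P`, the diagonal `p_u = P_uu` lies in `[0, 1]`, sums to `k`, and
`∑_{v ≠ u} P_uv² = p_u (1 - p_u)`. Each summand is then at most
`p_u p_v + 2 P_uv² / (1 - p_u) + 2 P_uv² / (1 - p_v)`, plus `2 |P_uv|` when `p_u, p_v > 1/2`.
The Motzkin–Straus inequality bounds `∑_{u ~ v} p_u p_v` by `(1 - 1/r) k²`, the quotients add up to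
at most `4 k`, and as fewer than `2 k` vertices have `p_u > 1/2`, Cauchy–Schwarz bounds the last
terms by `2 √((2k - 1)(2k - 2) k)`.
-/

theorem sqrt_mul_sub_add_two_mul_le (k : ℕ) (hk : 1 ≤ k) :
    √((2 * k - 1) * (2 * k - 2) * k) + 2 * k ≤ (4 * k - 2) * √k := by
  set a := √(k : ℝ)
  have ha2 : a ^ 2 = k := Real.sq_sqrt k.cast_nonneg
  have ha1 : 1 ≤ a := Real.one_le_sqrt.2 (by exact_mod_cast hk)
  suffices h : √((2 * k - 1) * (2 * k - 2) * k) ≤ (4 * k - 2) * a - 2 * k by linarith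
  rw [Real.sqrt_le_iff, ← ha2]
  -- after squaring, the difference of the two sides is `2 a² (6a⁴ - 8a³ - 3a² + 4a + 1)`
  refine ⟨by nlinarith [sq_nonneg (a - 1)], ?_⟩
  have hg : 0 ≤ 6 * a ^ 4 - 8 * a ^ 3 - 3 * a ^ 2 + 4 * a + 1 := by
    rcases hk.eq_or_lt with rfl | h2
    · norm_num [a]
    · have h2' : (2 : ℝ) ≤ a ^ 2 := by rw [ha2]; exact_mod_cast h2
      nlinarith [sq_nonneg (a - 1), sq_nonneg (a ^ 2 - 2), sq_nonneg (a ^ 2 - a),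
        mul_nonneg (sub_nonneg.2 ha1) (sub_nonneg.2 h2')]
  nlinarith [hg]

-- `x + y - 1 - x y = -(1 - x)(1 - y) ≤ -(1 - x) / 2`, and `2 |q| ≤ 2 q² / (1 - x) + (1 - x) / 2`.
theorem edge_term_le_of_le_half {x y q : ℝ} (hx : x ≤ 1) (hy : y ≤ 1 / 2)
    (hq : q ^ 2 ≤ x * (1 - x)) : x + y - 2 * q - 1 ≤ x * y + 2 * q ^ 2 / (1 - x) := by
  rcases hx.eq_or_lt with rfl | hx
  · have : q = 0 := by nlinarith [sq_nonneg q]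
    simp [this]
  · have hd : 0 < 1 - x := by linarith
    have : x + y - 2 * q - 1 - x * y ≤ 2 * q ^ 2 / (1 - x) := by
      rw [le_div_iff₀ hd]
      nlinarith [sq_nonneg (q + (1 - x) / 2),
        mul_nonneg (sq_nonneg (1 - x)) (by linarith : (0 : ℝ) ≤ 1 / 2 - y)]
    linarith

theorem edge_term_le {x y q : ℝ} (hx1 : x ≤ 1) (hy1 : y ≤ 1)
    (hqx : q ^ 2 ≤ x * (1 - x)) (hqy : q ^ 2 ≤ y * (1 - y)) :
    x + y - 2 * q - 1 ≤ x * y + (if 1 / 2 < x ∧ 1 / 2 < y then 2 * |q| else 0)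
      + 2 * q ^ 2 / (1 - x) + 2 * q ^ 2 / (1 - y) := by
  have hdx : 0 ≤ 2 * q ^ 2 / (1 - x) := div_nonneg (by positivity) (by linarith)
  have hdy : 0 ≤ 2 * q ^ 2 / (1 - y) := div_nonneg (by positivity) (by linarith)
  split_ifs with h
  · nlinarith [neg_abs_le q]
  · rcases not_and_or.1 h with h | h
    · linarith [edge_term_le_of_le_half hy1 (not_lt.1 h) hqy]
    · linarith [edge_term_le_of_le_half hx1 (not_lt.1 h) hqx]

theorem sq_sum_le_card_support_mul_sum_sq {ι : Type*} [Fintype ι] (p : ι → ℝ) :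
    (∑ i, p i) ^ 2 ≤ #{i | p i ≠ 0} * ∑ i, p i ^ 2 := by
  have h := sq_sum_le_card_mul_sum_sq (s := {i | p i ≠ 0}) (f := p)
  rwa [sum_filter_ne_zero, sum_filter_of_ne fun v _ h => by simpa using h] at h

theorem card_filter_half_lt_lt {ι : Type*} [Fintype ι] {p : ι → ℝ} (hp : 0 ≤ p)
    (h : 0 < ∑ i, p i) :
    (#{i | 1 / 2 < p i} : ℝ) < 2 * ∑ i, p i := by
  rcases eq_empty_or_nonempty ({i | 1 / 2 < p i} : Finset ι) with hB | hB
  · rw [hB, card_empty, Nat.cast_zero]; positivity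
  · have := sum_lt_sum_of_nonempty hB fun i hi => (mem_filter.1 hi).2
    rw [sum_const, nsmul_eq_mul] at this
    linarith [sum_le_univ_sum_of_nonneg (s := ({i | 1 / 2 < p i} : Finset ι)) hp]

namespace Matrix.IsSymm

variable {n : Type*} [Fintype n] {P : Matrix n n ℝ}

theorem sum_sq_apply_of_isIdempotentElem (hP : P.IsSymm) (hPP : IsIdempotentElem P) (u : n) :
    ∑ v, P u v ^ 2 = P u u := by
  conv_rhs => rw [← hPP.eq, mul_apply]
  exact sum_congr rfl fun v _ => by rw [hP.apply, sq]

theorem diag_nonneg_of_isIdempotentElem (hP : P.IsSymm) (hPP : IsIdempotentElem P) (u : n) :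
    0 ≤ P u u :=
  hP.sum_sq_apply_of_isIdempotentElem hPP u ▸ sum_nonneg fun _ _ => sq_nonneg _

variable [DecidableEq n]

theorem sum_erase_sq_apply_of_isIdempotentElem (hP : P.IsSymm) (hPP : IsIdempotentElem P)
    (u : n) : ∑ v ∈ univ.erase u, P u v ^ 2 = P u u * (1 - P u u) := by
  have := hP.sum_sq_apply_of_isIdempotentElem hPP u
  rw [← add_sum_erase _ _ (mem_univ u)] at this
  linarith

theorem diag_le_one_of_isIdempotentElem (hP : P.IsSymm) (hPP : IsIdempotentElem P) (u : n) :
    P u u ≤ 1 := by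
  have h := hP.sum_erase_sq_apply_of_isIdempotentElem hPP u
  have : 0 ≤ P u u * (1 - P u u) := h ▸ sum_nonneg fun _ _ => sq_nonneg _
  nlinarith [hP.diag_nonneg_of_isIdempotentElem hPP u]

theorem sq_apply_le_of_isIdempotentElem (hP : P.IsSymm) (hPP : IsIdempotentElem P) {u v : n}
    (huv : u ≠ v) : P u v ^ 2 ≤ P u u * (1 - P u u) :=
  hP.sum_erase_sq_apply_of_isIdempotentElem hPP u ▸
    single_le_sum (f := fun v => P u v ^ 2) (fun _ _ => sq_nonneg _)
      (mem_erase.2 ⟨huv.symm, mem_univ v⟩)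

end Matrix.IsSymm

namespace Matrix.IsHermitian

variable {𝕜 n : Type*} [RCLike 𝕜] [Fintype n] [DecidableEq n] {A : Matrix n n 𝕜}

theorem exists_isHermitian_idempotent_trace_mul_eq_sum_eigenvalues (hA : A.IsHermitian)
    (s : Finset n) :
    ∃ P : Matrix n n 𝕜, P.IsHermitian ∧ IsIdempotentElem P ∧ P.trace = #s ∧
      (A * P).trace = ∑ i ∈ s, (hA.eigenvalues i : 𝕜) := by
  set U : Matrix n n 𝕜 := (hA.eigenvectorUnitary : Matrix n n 𝕜)
  have hUU : star U * U = 1 := Unitary.coe_star_mul_self _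
  set E : Matrix n n 𝕜 := diagonal fun i => if i ∈ s then 1 else 0
  have hE : E.IsHermitian := by
    simp [E, IsHermitian, diagonal_conjTranspose]
  have hEE : E * E = E := by simp [E, diagonal_mul_diagonal]
  refine ⟨U * E * star U, isHermitian_mul_mul_conjTranspose U hE, ?_, ?_, ?_⟩
  · change U * E * star U * (U * E * star U) = U * E * star U
    calc U * E * star U * (U * E * star U) = U * (E * (star U * U) * E) * star U := by
          simp only [Matrix.mul_assoc]
      _ = U * E * star U := by rw [hUU, Matrix.mul_one, hEE, Matrix.mul_assoc]
  · rw [trace_mul_cycle, hUU, Matrix.one_mul]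
    simp [E, trace_diagonal]
  · conv_lhs => rw [hA.spectral_theorem]
    rw [Unitary.conjStarAlgAut_apply]
    set D : Matrix n n 𝕜 := diagonal (RCLike.ofReal ∘ hA.eigenvalues)
    calc (U * D * star U * (U * E * star U)).trace = (U * (D * E) * star U).trace := by
          simp only [Matrix.mul_assoc, ← Matrix.mul_assoc (star U) U, hUU, Matrix.one_mul]
      _ = (D * E).trace := by rw [trace_mul_cycle, hUU, Matrix.one_mul]
      _ = _ := by simp [D, E, diagonal_mul_diagonal, trace_diagonal]

end Matrix.IsHermitian

namespace SimpleGraph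

theorem IsClique.card_le_of_cliqueFree {V : Type*} {G : SimpleGraph V} {r : ℕ}
    (hG : G.CliqueFree (r + 1)) {s : Finset V} (hs : G.IsClique (s : Set V)) : #s ≤ r := by
  by_contra! h
  obtain ⟨t, hts, ht⟩ := exists_subset_card_eq h
  exact hG t ⟨hs.subset hts, ht⟩

variable {V : Type*} [Fintype V] (G : SimpleGraph V) [DecidableRel G.Adj]

theorem neighborFinset_subset_erase_univ [DecidableEq V] (u : V) :
    G.neighborFinset u ⊆ univ.erase u := fun v hv =>
  mem_erase.2 ⟨(G.ne_of_adj ((G.mem_neighborFinset u v).1 hv)).symm, mem_univ v⟩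

theorem sum_sum_neighborFinset_comm {M : Type*} [AddCommMonoid M] (f : V → V → M) :
    ∑ u, ∑ v ∈ G.neighborFinset u, f u v = ∑ u, ∑ v ∈ G.neighborFinset u, f v u := by
  simp only [neighborFinset_eq_filter, sum_filter]
  rw [sum_comm]
  simp only [G.adj_comm]

variable [DecidableEq V]

theorem trace_lapMatrix_mul {R : Type*} [CommRing R] (P : Matrix V V R) :
    (G.lapMatrix R * P).trace = ∑ u, ∑ v ∈ G.neighborFinset u, (P u u - P v u) := by
  refine sum_congr rfl fun u _ => ?_
  change (G.lapMatrix R *ᵥ fun v => P v u) u = _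
  rw [lapMatrix_mulVec_apply, sum_sub_distrib, sum_const, card_neighborFinset_eq_degree,
    nsmul_eq_mul]

theorem two_mul_trace_lapMatrix_mul_sub {R : Type*} [CommRing R] {P : Matrix V V R}
    (hP : P.IsSymm) :
    2 * ((G.lapMatrix R * P).trace - #G.edgeFinset) =
      ∑ u, ∑ v ∈ G.neighborFinset u, (P u u + P v v - 2 * P u v - 1) := by
  have hdarts : ∑ u, ∑ v ∈ G.neighborFinset u, (1 : R) = 2 * #G.edgeFinset := by
    simp only [sum_const, card_neighborFinset_eq_degree, nsmul_one]
    rw [← Nat.cast_sum, sum_degrees_eq_twice_card_edges]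
    push_cast
    rfl
  calc 2 * ((G.lapMatrix R * P).trace - #G.edgeFinset)
      = ∑ u, ∑ v ∈ G.neighborFinset u, (P u u - P v u)
        + ∑ u, ∑ v ∈ G.neighborFinset u, (P u u - P v u)
        - ∑ u, ∑ v ∈ G.neighborFinset u, (1 : R) := by
        rw [trace_lapMatrix_mul, hdarts]; ring
    _ = ∑ u, ∑ v ∈ G.neighborFinset u, (P u u - P v u)
        + ∑ u, ∑ v ∈ G.neighborFinset u, (P v v - P u v)
        - ∑ u, ∑ v ∈ G.neighborFinset u, (1 : R) := by
        rw [G.sum_sum_neighborFinset_comm fun u v => P u u - P v u]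
    _ = _ := by
        simp only [← sum_add_distrib, ← sum_sub_distrib]
        refine sum_congr rfl fun u _ => sum_congr rfl fun v _ => ?_
        rw [hP.apply u v]; ring

section MotzkinStraus

variable {G}

theorem dotProduct_adjMatrix_mulVec_le_sq_sum_sub {p : V → ℝ} (hp : 0 ≤ p) :
    p ⬝ᵥ G.adjMatrix ℝ *ᵥ p ≤ (∑ v, p v) ^ 2 - ∑ v, p v ^ 2 := by
  calc p ⬝ᵥ G.adjMatrix ℝ *ᵥ p = ∑ u, p u * ∑ v ∈ G.neighborFinset u, p v := by
        simp only [dotProduct, adjMatrix_mulVec_apply]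
    _ ≤ ∑ u, p u * ∑ v ∈ univ.erase u, p v := by
        gcongr with u
        · exact hp u
        · exact fun v _ _ => hp v
        · exact G.neighborFinset_subset_erase_univ u
    _ = (∑ v, p v) ^ 2 - ∑ v, p v ^ 2 := by
        simp only [sum_erase_eq_sub (mem_univ _), mul_sub, sum_sub_distrib, ← sum_mul, sq]

theorem dotProduct_adjMatrix_mulVec_shift (p : V → ℝ) (t : ℝ) {u v : V}
    (hadj : ¬ G.Adj u v) :
    (p + t • (Pi.single v 1 - Pi.single u 1)) ⬝ᵥ
        G.adjMatrix ℝ *ᵥ (p + t • (Pi.single v 1 - Pi.single u 1)) =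
      p ⬝ᵥ G.adjMatrix ℝ *ᵥ p + 2 * t * ((G.adjMatrix ℝ *ᵥ p) v - (G.adjMatrix ℝ *ᵥ p) u) := by
  have hcol : (G.adjMatrix ℝ).col = G.adjMatrix ℝ := G.transpose_adjMatrix
  simp only [mulVec_add, add_dotProduct, dotProduct_add, mulVec_smul, smul_dotProduct,
    dotProduct_smul, mulVec_sub, sub_dotProduct, dotProduct_sub, single_one_dotProduct,
    mulVec_single_one, hcol]
  simp [hadj, G.adj_comm v u]
  ring

theorem exists_shift_of_not_adj {p : V → ℝ} (hp : 0 ≤ p) {u v : V} (huv : u ≠ v)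
    (hadj : ¬ G.Adj u v) (hv : p v ≠ 0) (hu : p u ≠ 0)
    (hle : (G.adjMatrix ℝ *ᵥ p) u ≤ (G.adjMatrix ℝ *ᵥ p) v) :
    ∃ p' : V → ℝ, 0 ≤ p' ∧ ∑ w, p' w = ∑ w, p w ∧
      p ⬝ᵥ G.adjMatrix ℝ *ᵥ p ≤ p' ⬝ᵥ G.adjMatrix ℝ *ᵥ p' ∧
      #{w | p' w ≠ 0} < #{w | p w ≠ 0} := by
  set p' := p + p u • (Pi.single v 1 - Pi.single u 1)
  have hp' : ∀ w, p' w = if w = u then 0 else if w = v then p v + p u else p w := by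
    intro w
    by_cases hwu : w = u
    · subst hwu; simp [p', huv]
    · by_cases hwv : w = v
      · subst hwv; simp [p', hwu]
      · simp [p', hwu, hwv]
  refine ⟨p', fun w => ?_, ?_, ?_, ?_⟩
  · rw [hp']
    split_ifs
    · exact le_rfl
    · exact add_nonneg (hp v) (hp u)
    · exact hp w
  · simp [p', sum_add_distrib, ← mul_sum]
  · rw [dotProduct_adjMatrix_mulVec_shift p _ hadj]
    nlinarith [mul_nonneg (hp u) (sub_nonneg.2 hle)]
  · have hu' : u ∈ ({w | p w ≠ 0} : Finset V) := by simpa using hu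
    refine (card_le_card fun w hw => ?_).trans_lt (card_erase_lt_of_mem hu')
    simp only [mem_filter, mem_univ, true_and, mem_erase, hp'] at hw ⊢
    split_ifs at hw with h1 h2
    · exact absurd rfl hw
    · exact ⟨h1, h2 ▸ hv⟩
    · exact ⟨h1, hw⟩

-- Motzkin–Straus. Moving all the weight of one of two non-adjacent vertices of the support onto the
-- other does not decrease the form, so it suffices to treat weights supported on a clique.
theorem CliqueFree.dotProduct_adjMatrix_mulVec_le {r : ℕ} (hG : G.CliqueFree (r + 1))
    {p : V → ℝ} (hp : 0 ≤ p) :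
    p ⬝ᵥ G.adjMatrix ℝ *ᵥ p ≤ (1 - 1 / r) * (∑ v, p v) ^ 2 := by
  induction hN : #{v | p v ≠ 0} using Nat.strong_induction_on generalizing p with
  | _ N ih =>
  by_cases hcl : G.IsClique ({v | p v ≠ 0} : Finset V)
  · have hr : N ≤ r := hN ▸ hcl.card_le_of_cliqueFree hG
    have hcs := sq_sum_le_card_support_mul_sum_sq p
    have hsq : 0 ≤ ∑ v, p v ^ 2 := sum_nonneg fun v _ => sq_nonneg _
    refine (dotProduct_adjMatrix_mulVec_le_sq_sum_sub hp).trans ?_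
    rcases r.eq_zero_or_pos with rfl | hr0
    · simpa using hsq
    · have : (∑ v, p v) ^ 2 / r ≤ ∑ v, p v ^ 2 := by
        rw [div_le_iff₀ (by exact_mod_cast hr0)]
        calc (∑ v, p v) ^ 2 ≤ N * ∑ v, p v ^ 2 := hN ▸ hcs
          _ ≤ (∑ v, p v ^ 2) * r := by rw [mul_comm]; gcongr
      rw [sub_mul, one_mul, one_div_mul_eq_div]
      linarith
  · simp only [IsClique, Set.Pairwise, coe_filter, mem_univ, true_and, Set.mem_ofPred_eq,
      not_forall] at hcl
    obtain ⟨u, hu, v, hv, huv, hadj⟩ := hcl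
    have hmove : ∀ {u v : V}, p u ≠ 0 → p v ≠ 0 → u ≠ v → ¬ G.Adj u v →
        (G.adjMatrix ℝ *ᵥ p) u ≤ (G.adjMatrix ℝ *ᵥ p) v →
        p ⬝ᵥ G.adjMatrix ℝ *ᵥ p ≤ (1 - 1 / r) * (∑ v, p v) ^ 2 := by
      intro u v hu hv huv hadj hle
      obtain ⟨p', hp', hsum, hgain, hcard⟩ := exists_shift_of_not_adj hp huv hadj hv hu hle
      exact hgain.trans (hsum ▸ ih _ (hN ▸ hcard) hp' rfl)
    rcases le_total ((G.adjMatrix ℝ *ᵥ p) u) ((G.adjMatrix ℝ *ᵥ p) v) with hle | hle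
    · exact hmove hu hv huv hadj hle
    · exact hmove hv hu huv.symm (fun h => hadj h.symm) hle

end MotzkinStraus

variable {P : Matrix V V ℝ}

theorem sum_neighborFinset_sq_div_le (hP : P.IsSymm) (hPP : IsIdempotentElem P) :
    ∑ u, ∑ v ∈ G.neighborFinset u, 2 * P u v ^ 2 / (1 - P u u) ≤ 2 * P.trace := by
  rw [trace, mul_sum]
  refine sum_le_sum fun u _ => ?_
  rw [← sum_div, ← mul_sum]
  have hrow : ∑ v ∈ G.neighborFinset u, P u v ^ 2 ≤ P u u * (1 - P u u) :=
    (sum_le_sum_of_subset_of_nonneg (G.neighborFinset_subset_erase_univ u)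
      fun _ _ _ => sq_nonneg _).trans_eq
      (hP.sum_erase_sq_apply_of_isIdempotentElem hPP u)
  rcases (sub_nonneg.2 (hP.diag_le_one_of_isIdempotentElem hPP u)).eq_or_lt with h | h
  · rw [← h, div_zero]
    exact mul_nonneg zero_le_two (hP.diag_nonneg_of_isIdempotentElem hPP u)
  · rw [div_le_iff₀ h, diag_apply]
    nlinarith

theorem sum_neighborFinset_abs_le (hP : P.IsSymm) (hPP : IsIdempotentElem P) {k : ℕ}
    (hk : 1 ≤ k) (htr : P.trace = k) :
    ∑ u, ∑ v ∈ G.neighborFinset u, (if 1 / 2 < P u u ∧ 1 / 2 < P v v then 2 * |P u v| else 0)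
      ≤ 2 * √((2 * k - 1) * (2 * k - 2) * k) := by
  set B : Finset V := {u | 1 / 2 < P u u}
  have hk' : (1 : ℝ) ≤ k := by exact_mod_cast hk
  have hB : (#B : ℝ) + 1 ≤ 2 * k := by
    have hdiag : ∑ u, P u u = k := htr
    have hlt := card_filter_half_lt_lt (p := fun u => P u u)
      (fun u => hP.diag_nonneg_of_isIdempotentElem hPP u) (by linarith)
    rw [hdiag] at hlt
    have : #B < 2 * k := by exact_mod_cast hlt
    exact_mod_cast this
  have hoff : (#B.offDiag : ℝ) ≤ (2 * k - 1) * (2 * k - 2) := by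
    rw [offDiag_card, Nat.cast_sub (Nat.le_mul_self _)]
    push_cast
    nlinarith [mul_nonneg (sub_nonneg.2 hB) (by positivity : (0 : ℝ) ≤ #B)]
  have hsq : ∑ x ∈ B.offDiag, P x.1 x.2 ^ 2 ≤ k := by
    refine (sum_le_univ_sum_of_nonneg fun x => sq_nonneg _).trans_eq ?_
    rw [Fintype.sum_prod_type, ← htr, trace]
    exact sum_congr rfl fun u _ => hP.sum_sq_apply_of_isIdempotentElem hPP u
  have hcs : ∑ x ∈ B.offDiag, |P x.1 x.2| ≤ √((2 * k - 1) * (2 * k - 2) * k) := by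
    refine Real.le_sqrt_of_sq_le ?_
    calc (∑ x ∈ B.offDiag, |P x.1 x.2|) ^ 2 ≤ #B.offDiag * ∑ x ∈ B.offDiag, |P x.1 x.2| ^ 2 :=
          sq_sum_le_card_mul_sum_sq
      _ ≤ (2 * k - 1) * (2 * k - 2) * k := by
          simp only [sq_abs]
          exact mul_le_mul hoff hsq (sum_nonneg fun _ _ => sq_nonneg _) (by nlinarith)
  calc ∑ u, ∑ v ∈ G.neighborFinset u, (if 1 / 2 < P u u ∧ 1 / 2 < P v v then 2 * |P u v| else 0)
      = ∑ x ∈ univ ×ˢ univ with G.Adj x.1 x.2 ∧ x.1 ∈ B ∧ x.2 ∈ B, 2 * |P x.1 x.2| := by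
        rw [sum_filter, sum_product]
        refine sum_congr rfl fun u _ => ?_
        rw [neighborFinset_eq_filter, sum_filter]
        refine sum_congr rfl fun v _ => ?_
        simp only [B, mem_filter, mem_univ, true_and, ite_and]
    _ ≤ ∑ x ∈ B.offDiag, 2 * |P x.1 x.2| := by
        refine sum_le_sum_of_subset_of_nonneg (fun x hx => ?_) fun _ _ _ => by positivity
        simp only [mem_filter] at hx
        exact mem_offDiag.2 ⟨hx.2.2.1, hx.2.2.2, G.ne_of_adj hx.2.1⟩
    _ ≤ _ := by rw [← mul_sum]; gcongr

theorem trace_lapMatrix_mul_le_of_cliqueFree {r k : ℕ} (hG : G.CliqueFree (r + 1))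
    (hP : P.IsSymm) (hPP : IsIdempotentElem P) (hk : 1 ≤ k) (htr : P.trace = k) :
    (G.lapMatrix ℝ * P).trace ≤
      #G.edgeFinset + ((1 - 1 / r) * k ^ 2 / 2 + (4 * k - 2) * √k) := by
  have hdiag : ∑ u, P u u = k := htr
  have hedge : ∀ u, ∀ v ∈ G.neighborFinset u, P u u + P v v - 2 * P u v - 1 ≤
      P u u * P v v + (if 1 / 2 < P u u ∧ 1 / 2 < P v v then 2 * |P u v| else 0)
        + 2 * P u v ^ 2 / (1 - P u u) + 2 * P u v ^ 2 / (1 - P v v) := by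
    intro u v hv
    have huv := G.ne_of_adj ((G.mem_neighborFinset u v).1 hv)
    exact edge_term_le (hP.diag_le_one_of_isIdempotentElem hPP u)
      (hP.diag_le_one_of_isIdempotentElem hPP v) (hP.sq_apply_le_of_isIdempotentElem hPP huv)
      (hP.apply u v ▸ hP.sq_apply_le_of_isIdempotentElem hPP huv.symm)
  have hMS : ∑ u, ∑ v ∈ G.neighborFinset u, P u u * P v v ≤ (1 - 1 / r) * k ^ 2 := by
    have := hG.dotProduct_adjMatrix_mulVec_le (p := fun u => P u u)
      fun u => hP.diag_nonneg_of_isIdempotentElem hPP u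
    simpa only [dotProduct, adjMatrix_mulVec_apply, mul_sum, hdiag] using this
  have hR : ∑ u, ∑ v ∈ G.neighborFinset u, 2 * P u v ^ 2 / (1 - P v v) ≤ 2 * (k : ℝ) := by
    rw [G.sum_sum_neighborFinset_comm, ← htr]
    simpa only [hP.apply] using G.sum_neighborFinset_sq_div_le hP hPP
  have hsum : 2 * ((G.lapMatrix ℝ * P).trace - #G.edgeFinset) ≤
      ∑ u, ∑ v ∈ G.neighborFinset u, P u u * P v v
      + ∑ u, ∑ v ∈ G.neighborFinset u,
          (if 1 / 2 < P u u ∧ 1 / 2 < P v v then 2 * |P u v| else 0)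
      + ∑ u, ∑ v ∈ G.neighborFinset u, 2 * P u v ^ 2 / (1 - P u u)
      + ∑ u, ∑ v ∈ G.neighborFinset u, 2 * P u v ^ 2 / (1 - P v v) := by
    rw [G.two_mul_trace_lapMatrix_mul_sub hP]
    simp only [← sum_add_distrib]
    exact sum_le_sum fun u _ => sum_le_sum (hedge u)
  linarith [G.sum_neighborFinset_abs_le hP hPP hk htr, G.sum_neighborFinset_sq_div_le hP hPP,
    sqrt_mul_sub_add_two_mul_le k hk]

end SimpleGraph

theorem stmt_3_general (r : ℕ) {V : Type*} [Fintype V] [DecidableEq V]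
    (G : SimpleGraph V) [DecidableRel G.Adj] (hG : G.CliqueFree (r + 1))
    (k : ℕ) (hk1 : 1 ≤ k) :
    epsK G k ≤ (1 - 1 / (r : ℝ)) * (k : ℝ) ^ 2 / 2 + (4 * (k : ℝ) - 2) * Real.sqrt k := by
  have hk : (0 : ℝ) ≤ 4 * k - 2 := by
    have : (1 : ℝ) ≤ k := by exact_mod_cast hk1
    linarith
  have hbound : 0 ≤ (1 - 1 / (r : ℝ)) * (k : ℝ) ^ 2 / 2 + (4 * (k : ℝ) - 2) * Real.sqrt k :=
    add_nonneg (by have := Nat.one_sub_one_div_cast_nonneg (α := ℝ) r; positivity)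
      (mul_nonneg hk (Real.sqrt_nonneg _))
  rw [epsK, sub_le_iff_le_add']
  -- the bound must be nonnegative because `sSup ∅ = 0` when `k > card V`
  refine Real.sSup_le ?_ (add_nonneg (Nat.cast_nonneg _) hbound)
  rintro _ ⟨s, rfl, rfl⟩
  obtain ⟨P, hP, hPP, htr, hLP⟩ := (G.posSemidef_lapMatrix ℝ).isHermitian
    |>.exists_isHermitian_idempotent_trace_mul_eq_sum_eigenvalues s
  simp only [RCLike.ofReal_real_eq_id, id] at hLP
  rw [← hLP]
  exact G.trace_lapMatrix_mul_le_of_cliqueFree hG (isHermitian_iff_isSymm.1 hP) hPP hk1 htr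

theorem stmt_3 (r : ℕ) (hr : 2 ≤ r) {V : Type*} [Fintype V] [DecidableEq V]
    (G : SimpleGraph V) [DecidableRel G.Adj] (hG : G.CliqueFree (r + 1))
    (k : ℕ) (hk1 : 1 ≤ k) (hkn : k ≤ Fintype.card V) :
    epsK G k ≤ (1 - 1 / (r : ℝ)) * (k : ℝ) ^ 2 / 2 + (4 * (k : ℝ) - 2) * Real.sqrt k :=
  stmt_3_general r G hG k hk1
end

section
/- Let G=(V,E) be a finite simple graph and let 1 ≤ k ≤ |V|/2. Then λ_1(L(F_k(G))) ≤ |E| + 4k − 2. -/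
open Finset
open scoped symmDiff

/-- The `k`-th token graph of `G`: its vertices are the `k`-element subsets of the
vertex set of `G`, two of them being adjacent whenever their symmetric difference
is an edge of `G`. -/
def tokenGraph {V : Type*} [DecidableEq V] (G : SimpleGraph V) (k : ℕ) :
    SimpleGraph {s : Finset V // s.card = k} where
  Adj σ τ := ∃ u v, G.Adj u v ∧ σ.val ∆ τ.val = {u, v}
  symm := by
    constructor
    rintro σ τ ⟨u, v, huv, hd⟩
    exact ⟨u, v, huv, by rwa [symmDiff_comm]⟩
  loopless := by
    constructor
    rintro σ ⟨u, v, huv, hd⟩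
    rw [symmDiff_self] at hd
    have hu : u ∈ ({u, v} : Finset V) := by simp
    rw [← hd] at hu
    simp at hu

instance {V : Type*} [Fintype V] [DecidableEq V] (G : SimpleGraph V) [DecidableRel G.Adj]
    (k : ℕ) : DecidableRel (tokenGraph G k).Adj := fun σ τ =>
  inferInstanceAs (Decidable (∃ u v, G.Adj u v ∧ σ.val ∆ τ.val = {u, v}))

/-- The largest eigenvalue of a (symmetric) real matrix, expressed as the supremum
of the set of its real eigenvalues. -/
noncomputable def maxEigenvalue {n : Type*} [Fintype n] (M : Matrix n n ℝ) : ℝ :=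
  sSup {μ : ℝ | ∃ x : n → ℝ, x ≠ 0 ∧ M.mulVec x = μ • x}

/-!
For `x` on `k`-sets, `x ⬝ L x` is half the sum of `(x σ - x τ)²` over all moves `σ → τ` of one
token along an arc `(u, v)` of `G`; call the part of this sum coming from a set of arcs its energy.
The `2|E|` arcs of `G` have energy at most `(2|E| + 8k - 4) ‖x‖²`:
* a `k`-set cuts at most `k` arcs of an arc matching, so a matching has energy at most `2k ‖x‖²`;
* the two ends of a move along one of the `n` arcs leaving a vertex together cut `n + 1` of these
  arcs, so weighting `x σ²` by `(n + 1) / #(arcs cut by σ)` and applying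
  `(s - t)² ≤ (a + b) / a * s² + (a + b) / b * t²` bounds the energy of the star by
  `(n + 1) ‖x‖²`; arcs covered by a vertex set `C` therefore have energy at most
  `(#arcs + 2 #C) ‖x‖²`;
* either the arcs contain a matching of size `2k`, peeled off at cost `2k`, or the `≤ 4k - 2` ends
  of a maximal matching cover them.
-/

theorem sq_sub_le_div_mul_add_div_mul {a b : ℝ} (ha : 0 < a) (hb : 0 < b) (s t : ℝ) :
    (s - t) ^ 2 ≤ (a + b) / a * s ^ 2 + (a + b) / b * t ^ 2 := by
  have key : (a + b) / a * s ^ 2 + (a + b) / b * t ^ 2 - (s - t) ^ 2 =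
      (b * s + a * t) ^ 2 / (a * b) := by
    field_simp
    ring
  have : 0 ≤ (b * s + a * t) ^ 2 / (a * b) := by positivity
  linarith

namespace TokenGraph

variable {V : Type*} {k : ℕ}

theorem ne_of_movable {p : V × V} {σ : {s : Finset V // s.card = k}}
    (h : p.1 ∈ σ.1 ∧ p.2 ∉ σ.1) : p.1 ≠ p.2 :=
  fun he => h.2 (he ▸ h.1)

variable [DecidableEq V]

def move (p : V × V) (σ : {s : Finset V // s.card = k}) : {s : Finset V // s.card = k} :=
  if h : p.1 ∈ σ.1 ∧ p.2 ∉ σ.1 then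
    ⟨insert p.2 (σ.1.erase p.1), by
      rw [card_insert_of_notMem fun h' => h.2 (mem_of_mem_erase h'), card_erase_of_mem h.1, σ.2]
      exact Nat.sub_add_cancel (σ.2 ▸ card_pos.2 ⟨_, h.1⟩)⟩
  else σ

section Move

variable {p : V × V} {σ : {s : Finset V // s.card = k}}

theorem move_val (h : p.1 ∈ σ.1 ∧ p.2 ∉ σ.1) :
    (move p σ).1 = insert p.2 (σ.1.erase p.1) := by
  rw [move, dif_pos h]

theorem movable_swap_move (h : p.1 ∈ σ.1 ∧ p.2 ∉ σ.1) :
    p.2 ∈ (move p σ).1 ∧ p.1 ∉ (move p σ).1 := by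
  rw [move_val h]
  exact ⟨mem_insert_self _ _, by simp [ne_of_movable h]⟩

theorem move_swap_move (h : p.1 ∈ σ.1 ∧ p.2 ∉ σ.1) : move p.swap (move p σ) = σ := by
  apply Subtype.ext
  rw [move_val (movable_swap_move h), move_val h, Prod.fst_swap, Prod.snd_swap,
    erase_insert fun h' => h.2 (mem_of_mem_erase h'), insert_erase h.1]

theorem sdiff_move (h : p.1 ∈ σ.1 ∧ p.2 ∉ σ.1) : σ.1 \ (move p σ).1 = {p.1} := by
  rw [move_val h]
  ext a
  by_cases ha : a = p.1 <;> simp +contextual [ha, h.1, ne_of_movable h]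

theorem move_sdiff (h : p.1 ∈ σ.1 ∧ p.2 ∉ σ.1) : (move p σ).1 \ σ.1 = {p.2} := by
  rw [move_val h]
  ext a
  by_cases ha : a = p.2 <;> simp [ha, h.2]

end Move

variable [Fintype V]

def movable (p : V × V) : Finset {s : Finset V // s.card = k} := {σ | p.1 ∈ σ.1 ∧ p.2 ∉ σ.1}

@[simp]
theorem mem_movable {p : V × V} {σ : {s : Finset V // s.card = k}} :
    σ ∈ movable p ↔ p.1 ∈ σ.1 ∧ p.2 ∉ σ.1 := by
  simp [movable]

theorem sum_movable_move {M : Type*} [AddCommMonoid M] (p : V × V)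
    (f : {s : Finset V // s.card = k} → M) :
    ∑ σ ∈ movable p, f (move p σ) = ∑ σ ∈ movable p.swap, f σ := by
  refine sum_nbij' (move p) (move p.swap) (fun σ hσ => ?_) (fun σ hσ => ?_) (fun σ hσ => ?_)
    (fun σ hσ => ?_) fun _ _ => rfl
  all_goals rw [mem_movable] at hσ
  · exact mem_movable.2 (movable_swap_move hσ)
  · exact mem_movable.2 (movable_swap_move hσ)
  · exact move_swap_move hσ
  · simpa using move_swap_move hσ

variable (x : {s : Finset V // s.card = k} → ℝ)

def arcEnergy (p : V × V) : ℝ := ∑ σ ∈ movable p, (x σ - x (move p σ)) ^ 2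

def energy (η : Finset (V × V)) : ℝ := ∑ p ∈ η, arcEnergy x p

theorem energy_sdiff_add_energy {s η : Finset (V × V)} (h : s ⊆ η) :
    energy x (η \ s) + energy x s = energy x η :=
  sum_sdiff h

theorem energy_filter_add_energy_filter_not (η : Finset (V × V)) (P : V × V → Prop)
    [DecidablePred P] : energy x {q ∈ η | P q} + energy x {q ∈ η | ¬P q} = energy x η :=
  sum_filter_add_sum_filter_not η P _

theorem arcEnergy_swap (p : V × V) : arcEnergy x p.swap = arcEnergy x p := by
  rw [arcEnergy, arcEnergy, ← sum_movable_move p fun τ => (x τ - x (move p.swap τ)) ^ 2]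
  refine sum_congr rfl fun σ hσ => ?_
  rw [move_swap_move (mem_movable.1 hσ)]
  ring

theorem energy_image_swap (η : Finset (V × V)) : energy x (η.image Prod.swap) = energy x η := by
  rw [energy, sum_image fun p _ q _ h => Prod.swap_injective h]
  exact sum_congr rfl fun p _ => arcEnergy_swap x p

def cutCard (η : Finset (V × V)) (σ : {s : Finset V // s.card = k}) : ℕ :=
  #{p ∈ η | σ ∈ movable p ∨ σ ∈ movable p.swap}

theorem cutCard_pos {η : Finset (V × V)} {p : V × V} (hp : p ∈ η)
    {σ : {s : Finset V // s.card = k}} (hσ : σ ∈ movable p ∨ σ ∈ movable p.swap) :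
    0 < cutCard η σ :=
  card_pos.2 ⟨p, mem_filter.2 ⟨hp, hσ⟩⟩

theorem sum_sum_movable_add_move (η : Finset (V × V))
    (f : {s : Finset V // s.card = k} → ℝ) :
    ∑ p ∈ η, ∑ σ ∈ movable p, (f σ + f (move p σ)) = ∑ σ, (cutCard η σ : ℝ) * f σ := by
  have hsplit : ∀ p : V × V, ∑ σ ∈ movable p, (f σ + f (move p σ)) =
      ∑ σ, (if σ ∈ movable p ∨ σ ∈ movable p.swap then f σ else 0) := by
    intro p
    rw [sum_add_distrib, sum_movable_move, movable, movable, sum_filter, sum_filter,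
      ← sum_add_distrib]
    refine sum_congr rfl fun σ _ => ?_
    by_cases h : p.1 ∈ σ.1 ∧ p.2 ∉ σ.1
    · simp [h]
    · by_cases h' : p.2 ∈ σ.1 ∧ p.1 ∉ σ.1 <;> simp [h, h']
  simp_rw [hsplit, cutCard, card_filter]
  rw [sum_comm]
  push_cast
  simp_rw [sum_mul, ite_mul, one_mul, zero_mul]

theorem energy_le_of_cutCard_mul_le {η : Finset (V × V)}
    (ω : {s : Finset V // s.card = k} → ℝ) {C : ℝ} (hedge : ∀ p ∈ η, ∀ σ ∈ movable p,
      (x σ - x (move p σ)) ^ 2 ≤ ω σ * x σ ^ 2 + ω (move p σ) * x (move p σ) ^ 2)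
    (hcut : ∀ σ, cutCard η σ * ω σ ≤ C) :
    energy x η ≤ C * ∑ σ, x σ ^ 2 :=
  calc energy x η ≤ ∑ p ∈ η, ∑ σ ∈ movable p,
        (ω σ * x σ ^ 2 + ω (move p σ) * x (move p σ) ^ 2) :=
        sum_le_sum fun p hp => sum_le_sum fun σ hσ => hedge p hp σ hσ
    _ = ∑ σ, cutCard η σ * ω σ * x σ ^ 2 := by
        simp_rw [mul_assoc]; exact sum_sum_movable_add_move η fun σ => ω σ * x σ ^ 2
    _ ≤ ∑ σ, C * x σ ^ 2 := sum_le_sum fun σ _ => by gcongr; exact hcut σ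
    _ = C * ∑ σ, x σ ^ 2 := (mul_sum _ _ _).symm

def IsArcMatching (M : Finset (V × V)) : Prop :=
  (M : Set (V × V)).Pairwise fun p q => Disjoint ({p.1, p.2} : Finset V) {q.1, q.2}

theorem cutCard_le_of_isArcMatching {M : Finset (V × V)} (hM : IsArcMatching M)
    (σ : {s : Finset V // s.card = k}) : cutCard M σ ≤ k := by
  let endIn : V × V → V := fun p => if p.1 ∈ σ.1 then p.1 else p.2
  have hend : ∀ p, endIn p ∈ ({p.1, p.2} : Finset V) := fun p => by
    by_cases h : p.1 ∈ σ.1 <;> simp [endIn, h]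
  refine (card_le_card_of_injOn endIn (fun p hp => ?_) fun p hp q hq hpq => ?_).trans_eq σ.2
  · obtain ⟨-, hσ | hσ⟩ := mem_filter.1 hp
    · simp [endIn, (mem_movable.1 hσ).1]
    · simp only [mem_movable, Prod.fst_swap, Prod.snd_swap] at hσ
      simp [endIn, hσ.1, hσ.2]
  · by_contra hne
    exact disjoint_left.1 (hM (mem_filter.1 hp).1 (mem_filter.1 hq).1 hne) (hend p)
      (hpq ▸ hend q)

theorem energy_le_of_isArcMatching {M : Finset (V × V)} (hM : IsArcMatching M) :
    energy x M ≤ 2 * k * ∑ σ, x σ ^ 2 := by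
  refine energy_le_of_cutCard_mul_le x (fun _ => 2) (fun p _ σ _ => ?_) fun σ => ?_
  · nlinarith [sq_nonneg (x σ + x (move p σ))]
  · have : (cutCard M σ : ℝ) ≤ k := by exact_mod_cast cutCard_le_of_isArcMatching hM σ
    linarith

section Star

variable {η : Finset (V × V)} {c : V}

theorem cutCard_add_cutCard_move (hη : ∀ q ∈ η, q.1 = c ∧ q.2 ≠ c) {p : V × V} (hp : p ∈ η)
    {σ : {s : Finset V // s.card = k}} (hσ : σ ∈ movable p) :
    cutCard η σ + cutCard η (move p σ) = #η + 1 := by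
  obtain ⟨hpσ, hpσ'⟩ := mem_movable.1 hσ
  obtain ⟨hp1, -⟩ := hη p hp
  subst hp1
  have hcut : cutCard η σ = #{q ∈ η | q.2 ∉ σ.1} := by
    refine congrArg card (filter_congr fun q hq => ?_)
    simp [(hη q hq).1, hpσ]
  have hcut' : cutCard η (move p σ) = #{q ∈ η | q.2 ∈ σ.1} + 1 := by
    rw [cutCard, ← card_insert_of_notMem (s := {q ∈ η | q.2 ∈ σ.1}) (a := p) (by simp [hpσ'])]
    congr 1
    ext q
    simp only [mem_filter, mem_insert, mem_movable, move_val (mem_movable.1 hσ), Prod.fst_swap,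
      Prod.snd_swap]
    by_cases hq : q ∈ η
    · obtain ⟨hq1, hq2⟩ := hη q hq
      simp [hq, Prod.ext_iff, hq1, hq2, ne_of_movable (mem_movable.1 hσ)]
    · simp only [hq, false_and, or_false, false_iff]
      exact fun h => hq (h ▸ hp)
  rw [hcut, hcut', ← add_assoc, add_comm #{q ∈ η | q.2 ∉ σ.1},
    card_filter_add_card_filter_not]

theorem energy_le_of_forall_fst_eq (hη : ∀ q ∈ η, q.1 = c ∧ q.2 ≠ c) :
    energy x η ≤ (#η + 1) * ∑ σ, x σ ^ 2 := by
  refine energy_le_of_cutCard_mul_le x (fun σ => (#η + 1) / cutCard η σ)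
    (fun p hp σ hσ => ?_) fun σ => ?_
  · have hsum : (cutCard η σ : ℝ) + cutCard η (move p σ) = #η + 1 := by
      exact_mod_cast cutCard_add_cutCard_move hη hp hσ
    rw [← hsum]
    exact sq_sub_le_div_mul_add_div_mul (by exact_mod_cast cutCard_pos hp (.inl hσ))
      (by exact_mod_cast cutCard_pos hp (.inr (mem_movable.2 (movable_swap_move
        (mem_movable.1 hσ))))) _ _
  · rcases eq_or_ne (cutCard η σ : ℝ) 0 with h | h
    · rw [h, zero_mul]
      positivity
    · rw [mul_div_cancel₀ _ h]

theorem energy_le_of_forall_fst_eq_or_snd_eq (hloop : ∀ q ∈ η, q.1 ≠ q.2)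
    (hc : ∀ q ∈ η, q.1 = c ∨ q.2 = c) :
    energy x η ≤ (#η + 2) * ∑ σ, x σ ^ 2 := by
  have hout := energy_le_of_forall_fst_eq x (η := {q ∈ η | q.1 = c}) (c := c) fun q hq => by
    obtain ⟨hqη, rfl⟩ := mem_filter.1 hq
    exact ⟨rfl, (hloop q hqη).symm⟩
  have hin := energy_le_of_forall_fst_eq x (η := {q ∈ η | ¬q.1 = c}.image Prod.swap) (c := c)
    fun q hq => by
      obtain ⟨r, hr, rfl⟩ := mem_image.1 hq
      obtain ⟨hrη, hr1⟩ := mem_filter.1 hr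
      exact ⟨(hc r hrη).resolve_left hr1, hr1⟩
  rw [energy_image_swap, card_image_of_injective _ Prod.swap_injective] at hin
  have hcard : (#{q ∈ η | q.1 = c} : ℝ) + #{q ∈ η | ¬q.1 = c} = #η := by
    exact_mod_cast card_filter_add_card_filter_not _
  rw [← energy_filter_add_energy_filter_not x η fun q => q.1 = c, ← hcard]
  linarith

end Star

theorem energy_le_of_cover {η : Finset (V × V)} (hloop : ∀ q ∈ η, q.1 ≠ q.2) (C : Finset V)
    (hC : ∀ q ∈ η, q.1 ∈ C ∨ q.2 ∈ C) :
    energy x η ≤ (#η + 2 * #C) * ∑ σ, x σ ^ 2 := by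
  induction C using Finset.induction_on generalizing η with
  | empty =>
    obtain rfl : η = ∅ := eq_empty_of_forall_notMem fun q hq => by simpa using hC q hq
    simp [energy]
  | insert c C hcC ih =>
    have hstar := energy_le_of_forall_fst_eq_or_snd_eq x (η := {q ∈ η | q.1 = c ∨ q.2 = c})
      (fun q hq => hloop q (mem_filter.1 hq).1) fun q hq => (mem_filter.1 hq).2
    have hrest := ih (η := {q ∈ η | ¬(q.1 = c ∨ q.2 = c)})
      (fun q hq => hloop q (mem_filter.1 hq).1) fun q hq => by
        obtain ⟨hq, hq'⟩ := mem_filter.1 hq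
        have := hC q hq
        simp only [mem_insert] at this
        tauto
    have hcard :
        (#{q ∈ η | q.1 = c ∨ q.2 = c} : ℝ) + #{q ∈ η | ¬(q.1 = c ∨ q.2 = c)} = #η := by
      exact_mod_cast card_filter_add_card_filter_not _
    rw [← energy_filter_add_energy_filter_not x η fun q => q.1 = c ∨ q.2 = c,
      card_insert_of_notMem hcC, ← hcard]
    push_cast
    linarith

theorem exists_isArcMatching_or_exists_cover (η : Finset (V × V)) (n : ℕ) :
    (∃ M ⊆ η, #M = n ∧ IsArcMatching M) ∨
      ∃ C : Finset V, #C + 2 ≤ 2 * n ∧ ∀ q ∈ η, q.1 ∈ C ∨ q.2 ∈ C := by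
  induction n with
  | zero => exact .inl ⟨∅, empty_subset _, rfl, by simp [IsArcMatching]⟩
  | succ n ih =>
    obtain ⟨M, hMη, hMn, hM⟩ | ⟨C, hC, hcov⟩ := ih
    · let C := M.biUnion fun p => {p.1, p.2}
      have hC : #C ≤ 2 * n := by
        rw [← hMn, mul_comm]
        exact card_biUnion_le_card_mul _ _ _ fun _ _ => card_le_two
      by_cases hcov : ∀ q ∈ η, q.1 ∈ C ∨ q.2 ∈ C
      · exact .inr ⟨C, by omega, hcov⟩
      push Not at hcov
      obtain ⟨q, hqη, hq1, hq2⟩ := hcov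
      have hdisj : ∀ p ∈ M, Disjoint ({q.1, q.2} : Finset V) {p.1, p.2} := fun p hp => by
        have hpC : {p.1, p.2} ⊆ C := subset_biUnion_of_mem (fun p : V × V => {p.1, p.2}) hp
        rw [disjoint_left]
        rintro a ha hap
        rcases mem_insert.1 ha with rfl | ha
        · exact hq1 (hpC hap)
        · exact hq2 (mem_singleton.1 ha ▸ hpC hap)
      have hqM : q ∉ M := fun h => hq1 (mem_biUnion.2 ⟨q, h, by simp⟩)
      refine .inl ⟨insert q M, insert_subset hqη hMη, by rw [card_insert_of_notMem hqM, hMn],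
        ?_⟩
      rw [IsArcMatching, coe_insert, Set.pairwise_insert]
      exact ⟨hM, fun p hp _ => ⟨hdisj p hp, (hdisj p hp).symm⟩⟩
    · exact .inr ⟨C, by omega, hcov⟩

theorem energy_le (hk : 1 ≤ k) (ε : Finset (V × V)) (hloop : ∀ q ∈ ε, q.1 ≠ q.2) :
    energy x ε ≤ (#ε + 8 * k - 4) * ∑ σ, x σ ^ 2 := by
  induction ε using Finset.strongInduction with
  | H ε ih =>
  obtain ⟨M, hMε, hMk, hM⟩ | ⟨C, hC, hcov⟩ := exists_isArcMatching_or_exists_cover ε (2 * k)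
  · have hrest := ih _ (sdiff_ssubset hMε (card_pos.1 (by omega))) fun q hq =>
      hloop q (mem_sdiff.1 hq).1
    have hcard : (#(ε \ M) : ℝ) + #M = #ε := by
      exact_mod_cast card_sdiff_add_card_eq_card hMε
    rw [← energy_sdiff_add_energy x hMε, ← hcard, hMk]
    push_cast
    linarith [energy_le_of_isArcMatching x hM]
  · have hC' : (#C : ℝ) + 2 ≤ 4 * k := by exact_mod_cast (by omega : #C + 2 ≤ 4 * k)
    calc energy x ε ≤ (#ε + 2 * #C) * ∑ σ, x σ ^ 2 := energy_le_of_cover x hloop C hcov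
      _ ≤ (#ε + 8 * k - 4) * ∑ σ, x σ ^ 2 := by gcongr; linarith

section Laplacian

variable (G : SimpleGraph V)

theorem tokenGraph_adj_move {p : V × V} (hp : G.Adj p.1 p.2) {σ : {s : Finset V // s.card = k}}
    (hσ : σ ∈ movable p) : (tokenGraph G k).Adj σ (move p σ) := by
  refine ⟨p.1, p.2, hp, ?_⟩
  rw [symmDiff_def, sup_eq_union, sdiff_move (mem_movable.1 hσ),
    move_sdiff (mem_movable.1 hσ)]
  rfl

theorem exists_move_eq_of_tokenGraph_adj {σ τ : {s : Finset V // s.card = k}}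
    (h : (tokenGraph G k).Adj σ τ) : ∃ p, G.Adj p.1 p.2 ∧ σ ∈ movable p ∧ move p σ = τ := by
  obtain ⟨u, v, huv, hd⟩ := h
  rw [symmDiff_def, sup_eq_union] at hd
  have hcard : #(σ.1 \ τ.1) = #(τ.1 \ σ.1) := card_sdiff_comm (σ.2.trans τ.2.symm)
  have htwo : #(σ.1 \ τ.1) + #(τ.1 \ σ.1) = 2 := by
    rw [← card_union_of_disjoint disjoint_sdiff_sdiff, hd, card_pair huv.ne]
  obtain ⟨a, ha⟩ := card_eq_one.1 (show #(σ.1 \ τ.1) = 1 by omega)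
  obtain ⟨b, hb⟩ := card_eq_one.1 (show #(τ.1 \ σ.1) = 1 by omega)
  have haσ : a ∈ σ.1 := (mem_sdiff.1 (ha ▸ mem_singleton_self a)).1
  have hbσ : b ∉ σ.1 := (mem_sdiff.1 (hb ▸ mem_singleton_self b)).2
  have hmov : σ ∈ movable (a, b) := mem_movable.2 ⟨haσ, hbσ⟩
  refine ⟨(a, b), ?_, hmov, Subtype.ext ?_⟩
  · have hab : ({a, b} : Finset V) = {u, v} := by rw [← hd, ha, hb]; rfl
    have hau : a ∈ ({u, v} : Finset V) := hab ▸ mem_insert_self a {b}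
    have hbu : b ∈ ({u, v} : Finset V) := hab ▸ mem_insert_of_mem (mem_singleton_self b)
    simp only [mem_insert, mem_singleton] at hau hbu
    have hne : a ≠ b := fun h => hbσ (h ▸ haσ)
    rcases hau with rfl | rfl <;> rcases hbu with rfl | rfl
    exacts [absurd rfl hne, huv, huv.symm, absurd rfl hne]
  · rw [move_val (mem_movable.1 hmov)]
    ext z
    have hza := congrArg (z ∈ ·) ha
    have hzb := congrArg (z ∈ ·) hb
    simp only [mem_sdiff, mem_singleton, eq_iff_iff] at hza hzb
    simp only [mem_insert, mem_erase]
    tauto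

theorem sum_adj_sq_eq_energy [DecidableRel G.Adj] (x : {s : Finset V // s.card = k} → ℝ) :
    ∑ σ, ∑ τ, (if (tokenGraph G k).Adj σ τ then (x σ - x τ) ^ 2 else 0) =
      energy x {p | G.Adj p.1 p.2} := by
  rw [energy]
  simp_rw [arcEnergy]
  rw [sum_comm' (t' := univ) (s' := fun σ => {p | G.Adj p.1 p.2 ∧ σ ∈ movable p})
    fun p σ => by simp]
  refine sum_congr rfl fun σ _ => ?_
  rw [← sum_filter]
  symm
  refine sum_nbij (fun p => move p σ) (fun p hp => ?_) (fun p hp q hq hpq => ?_)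
    (fun τ hτ => ?_) fun _ _ => rfl
  · obtain ⟨hadj, hσ⟩ := (mem_filter.1 hp).2
    exact mem_filter.2 ⟨mem_univ _, tokenGraph_adj_move G hadj hσ⟩
  · have hp' := mem_movable.1 (mem_filter.1 hp).2.2
    have hq' := mem_movable.1 (mem_filter.1 hq).2.2
    have h1 := sdiff_move hp'
    have h2 := move_sdiff hp'
    rw [show move p σ = move q σ from hpq] at h1 h2
    rw [sdiff_move hq', singleton_inj] at h1
    rw [move_sdiff hq', singleton_inj] at h2
    exact Prod.ext h1.symm h2.symm
  · obtain ⟨p, hadj, hσ, rfl⟩ := exists_move_eq_of_tokenGraph_adj G (mem_filter.1 hτ).2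
    exact ⟨p, mem_filter.2 ⟨mem_univ _, hadj, hσ⟩, rfl⟩

end Laplacian

end TokenGraph

theorem maxEigenvalue_le_of_forall_dotProduct_mulVec_le {n : Type*} [Fintype n]
    (M : Matrix n n ℝ) {c : ℝ} (hc : 0 ≤ c) (h : ∀ x, x ⬝ᵥ M.mulVec x ≤ c * (x ⬝ᵥ x)) :
    maxEigenvalue M ≤ c := by
  refine Real.sSup_le (fun μ ⟨x, hx, hμ⟩ => ?_) hc
  have hpos : 0 < x ⬝ᵥ x := by simpa using Matrix.dotProduct_star_self_pos_iff.2 hx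
  have hx := h x
  rw [hμ, dotProduct_smul, smul_eq_mul] at hx
  exact le_of_mul_le_mul_right hx hpos

theorem stmt_4_general {V : Type*} [Fintype V] [DecidableEq V] (G : SimpleGraph V)
    [DecidableRel G.Adj] (k : ℕ) (hk1 : 1 ≤ k) :
    maxEigenvalue ((tokenGraph G k).lapMatrix ℝ) ≤
      (G.edgeFinset.card : ℝ) + 4 * (k : ℝ) - 2 := by
  have hk : (1 : ℝ) ≤ k := by exact_mod_cast hk1
  have hE : (0 : ℝ) ≤ G.edgeFinset.card := Nat.cast_nonneg _
  refine maxEigenvalue_le_of_forall_dotProduct_mulVec_le _ (by linarith) fun x => ?_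
  have hquad := SimpleGraph.lapMatrix_toLinearMap₂' ℝ (tokenGraph G k) x
  rw [Matrix.toLinearMap₂'_apply', TokenGraph.sum_adj_sq_eq_energy] at hquad
  have harcs : (#{p : V × V | G.Adj p.1 p.2} : ℝ) = 2 * G.edgeFinset.card := by
    exact_mod_cast G.two_mul_card_edgeFinset.symm
  have hbound := TokenGraph.energy_le x hk1 {p : V × V | G.Adj p.1 p.2}
    fun p hp => (mem_filter.1 hp).2.ne
  have hsq : x ⬝ᵥ x = ∑ σ, x σ ^ 2 := by simp [dotProduct, sq]
  rw [harcs] at hbound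
  rw [hquad, hsq]
  linarith

theorem stmt_4 {V : Type*} [Fintype V] [DecidableEq V] (G : SimpleGraph V)
    [DecidableRel G.Adj] (k : ℕ) (hk1 : 1 ≤ k) (hk2 : 2 * k ≤ Fintype.card V) :
    maxEigenvalue ((tokenGraph G k).lapMatrix ℝ) ≤
      (G.edgeFinset.card : ℝ) + 4 * (k : ℝ) - 2 :=
  stmt_4_general G k hk1
end

section
/- Let V be a finite set and let f : 𝒢(V) → ℝ be a subadditive function. Then for every graph G=(V,E) ∈ 𝒢(V) there exists a spanning subgraph G'=(V,E') of G (with E' ⊆ E) such that f(G') ≥ f(G) and f(H) > 0 for every spanning subgraph H of G' having at least one edge. -/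
/-- `f` is subadditive on the graphs on a fixed vertex set `V`: whenever `G₁` and `G₂`
are edge-disjoint, `f` of their union is at most `f G₁ + f G₂`. -/
def SubadditiveGraphFn {V : Type*} (f : SimpleGraph V → ℝ) : Prop :=
  ∀ G₁ G₂ : SimpleGraph V, Disjoint G₁.edgeSet G₂.edgeSet → f (G₁ ⊔ G₂) ≤ f G₁ + f G₂

theorem stmt_6 {V : Type*} [Fintype V] (f : SimpleGraph V → ℝ)
    (hf : SubadditiveGraphFn f) (G : SimpleGraph V) :
    ∃ G' : SimpleGraph V, G' ≤ G ∧ f G ≤ f G' ∧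
      ∀ H : SimpleGraph V, H ≤ G' → H.edgeSet.Nonempty → 0 < f H := by
  classical
  set P : ℕ → Prop := fun n => ∃ K : SimpleGraph V, K ≤ G ∧ f G ≤ f K ∧ K.edgeSet.ncard = n
    with hP
  have hPex : ∃ n, P n := ⟨G.edgeSet.ncard, G, le_refl G, le_refl _, rfl⟩
  obtain ⟨K, hKG, hfK, hKn⟩ := Nat.find_spec hPex
  refine ⟨K, hKG, hfK, ?_⟩
  intro H hHK hHe
  have hdisj : Disjoint H.edgeSet (K \ H).edgeSet := by
    rw [SimpleGraph.edgeSet_sdiff]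
    exact Set.disjoint_sdiff_right
  have hsup : H ⊔ (K \ H) = K := sup_sdiff_cancel' le_rfl hHK
  have hle : f K ≤ f H + f (K \ H) := by
    have := hf H (K \ H) hdisj
    rwa [hsup] at this
  have hfin : K.edgeSet.Finite := Set.toFinite _
  have hlt : (K \ H).edgeSet.ncard < K.edgeSet.ncard := by
    apply Set.ncard_lt_ncard _ hfin
    rw [SimpleGraph.edgeSet_sdiff]
    constructor
    · exact Set.diff_subset
    · intro hsub
      obtain ⟨e, he⟩ := hHe
      have heK : e ∈ K.edgeSet := SimpleGraph.edgeSet_mono hHK he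
      have := hsub heK
      exact this.2 he
  rw [hKn] at hlt
  have hnot : ¬ P ((K \ H).edgeSet.ncard) := Nat.find_min hPex hlt
  have hflt : f (K \ H) < f G := by
    by_contra h
    push_neg at h
    exact hnot ⟨K \ H, le_trans sdiff_le hKG, h, rfl⟩
  linarith
end

section
/- Let V be a finite linearly ordered set, let 1 ≤ k ≤ |V|, and let G₁=(V,E₁) and G₂=(V,E₂) be edge-disjoint simple graphs on V. Then ε̃_k(G₁ ∪ G₂) ≤ ε̃_k(G₁) + ε̃_k(G₂), where G₁ ∪ G₂ is the graph on V with edge set E₁ ∪ E₂. -/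
open Finset
open scoped symmDiff

/-- `sign(σ,τ) = (−1)^{|{w ∈ σ ∩ τ : u < w < v}|}`, where `u < v` are the two elements
of the symmetric difference `σ ∆ τ` (for `|σ ∆ τ| = 2`, the condition `u < w < v` is
expressed as: some element of `σ ∆ τ` is smaller than `w` and some element is larger). -/
def signPair {V : Type*} [LinearOrder V] (σ τ : Finset V) : ℝ :=
  (-1 : ℝ) ^ ((σ ∩ τ).filter fun w => (∃ a ∈ σ ∆ τ, a < w) ∧ ∃ b ∈ σ ∆ τ, w < b).card

open Classical in
/-- The matrix `M_k(G)`, with rows and columns indexed by the `k`-element subsets of the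
vertex set: the diagonal entry at `σ` is the number of edges meeting `σ`; the entry at
`(σ, τ)` is `−sign(σ,τ)` if `σ ∆ τ` is an edge of `G`; and all other entries vanish. -/
noncomputable def Mk {V : Type*} [Fintype V] [LinearOrder V] (G : SimpleGraph V) (k : ℕ) :
    Matrix {s : Finset V // s.card = k} {s : Finset V // s.card = k} ℝ :=
  fun σ τ =>
    if σ = τ then ((G.edgeFinset.filter fun e => ∃ v ∈ σ.val, v ∈ e).card : ℝ)
    else if ∃ u v : V, G.Adj u v ∧ σ.val ∆ τ.val = {u, v} then -signPair σ.val τ.val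
    else 0

open Classical in
/-- `ε̃_k(G) = λ_1(M_k(G)) − |E(G)|`. (For `k = 0`, `M_0(G)` is the `1 × 1` zero matrix,
so this also yields `ε̃_0(G) = −|E(G)|`.) -/
noncomputable def tEps {V : Type*} [Fintype V] [LinearOrder V] (G : SimpleGraph V)
    (k : ℕ) : ℝ :=
  maxEigenvalue (Mk G k) - G.edgeFinset.card

/-!
The largest eigenvalue of a symmetric matrix is the maximum of its Rayleigh quotient, hence
subadditive (Weyl). Edge-disjointness makes `M_k` additive in the graph: the diagonal counts
edges meeting `σ`, and an off-diagonal pair `σ ∆ τ` is an edge of at most one of the two graphs.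
Since `|E₁ ∪ E₂| = |E₁| + |E₂|` as well, subadditivity passes to `ε̃_k`.
-/

open Module.End

section Rayleigh

variable {E : Type*} [NormedAddCommGroup E] [InnerProductSpace ℝ E] [FiniteDimensional ℝ E]

lemma LinearMap.bddAbove_rayleigh (T : E →ₗ[ℝ] E) :
    BddAbove (Set.range fun x : {x : E // x ≠ 0} => inner ℝ (T x) (x : E) / ‖(x : E)‖ ^ 2) :=
  ⟨‖LinearMap.toContinuousLinearMap T‖, by
    rintro _ ⟨x, rfl⟩
    exact (le_abs_self _).trans ((LinearMap.toContinuousLinearMap T).rayleighQuotient_le_norm x)⟩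

lemma LinearMap.IsSymmetric.isGreatest_hasEigenvalue [Nontrivial E] {T : E →ₗ[ℝ] E}
    (hT : T.IsSymmetric) :
    IsGreatest {μ : ℝ | HasEigenvalue T μ}
      (⨆ x : {x : E // x ≠ 0}, inner ℝ (T x) (x : E) / ‖(x : E)‖ ^ 2) := by
  refine ⟨by simpa using hT.hasEigenvalue_iSup_of_finiteDimensional, fun μ hμ => ?_⟩
  obtain ⟨v, hv⟩ := hμ.exists_hasEigenvector
  have hv0 : ‖v‖ ^ 2 ≠ 0 := by simpa using hv.2
  calc μ = inner ℝ (T v) v / ‖v‖ ^ 2 := by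
        rw [mem_eigenspace_iff.mp hv.1, real_inner_smul_left, real_inner_self_eq_norm_sq,
          mul_div_cancel_right₀ _ hv0]
    _ ≤ _ := le_ciSup T.bddAbove_rayleigh ⟨v, hv.2⟩

lemma LinearMap.IsSymmetric.sSup_hasEigenvalue_add_le [Nontrivial E] {S T : E →ₗ[ℝ] E}
    (hS : S.IsSymmetric) (hT : T.IsSymmetric) :
    sSup {μ : ℝ | HasEigenvalue (S + T) μ} ≤
      sSup {μ : ℝ | HasEigenvalue S μ} + sSup {μ : ℝ | HasEigenvalue T μ} := by
  rw [(hS.add hT).isGreatest_hasEigenvalue.csSup_eq, hS.isGreatest_hasEigenvalue.csSup_eq,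
    hT.isGreatest_hasEigenvalue.csSup_eq]
  have : Nonempty {x : E // x ≠ 0} := (exists_ne (0 : E)).elim fun x hx => ⟨⟨x, hx⟩⟩
  refine ciSup_le fun x => ?_
  rw [LinearMap.add_apply, inner_add_left, add_div]
  exact add_le_add (le_ciSup S.bddAbove_rayleigh x) (le_ciSup T.bddAbove_rayleigh x)

end Rayleigh

section Matrix

variable {n : Type*} [Fintype n] [DecidableEq n]

lemma Matrix.hasEigenvalue_toEuclideanLin_iff {M : Matrix n n ℝ} {μ : ℝ} :
    HasEigenvalue (Matrix.toEuclideanLin M) μ ↔ ∃ x : n → ℝ, x ≠ 0 ∧ M.mulVec x = μ • x := by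
  constructor
  · intro h
    obtain ⟨v, hv⟩ := h.exists_hasEigenvector
    refine ⟨WithLp.ofLp v, by simpa using hv.2, ?_⟩
    simpa using congrArg WithLp.ofLp (mem_eigenspace_iff.mp hv.1)
  · rintro ⟨x, hx0, hx⟩
    refine hasEigenvalue_of_hasEigenvector (x := WithLp.toLp 2 x) ⟨?_, by simpa using hx0⟩
    rw [mem_eigenspace_iff, Matrix.toLpLin_toLp, Matrix.toLin'_apply, hx]
    rfl

lemma maxEigenvalue_eq_sSup_hasEigenvalue (M : Matrix n n ℝ) :
    maxEigenvalue M = sSup {μ : ℝ | HasEigenvalue (Matrix.toEuclideanLin M) μ} := by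
  simp only [maxEigenvalue, Matrix.hasEigenvalue_toEuclideanLin_iff]

lemma maxEigenvalue_add_le {A B : Matrix n n ℝ} (hA : A.IsHermitian) (hB : B.IsHermitian) :
    maxEigenvalue (A + B) ≤ maxEigenvalue A + maxEigenvalue B := by
  cases isEmpty_or_nonempty n
  -- no index means no nonzero vector, so all three values are the junk `sSup ∅ = 0`
  · simp [maxEigenvalue, Subsingleton.elim _ (0 : n → ℝ)]
  simp only [maxEigenvalue_eq_sSup_hasEigenvalue, map_add]
  exact (Matrix.isSymmetric_toEuclideanLin_iff.mpr hA).sSup_hasEigenvalue_add_le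
    (Matrix.isSymmetric_toEuclideanLin_iff.mpr hB)

end Matrix

section Graph

variable {V : Type*}

lemma SimpleGraph.adj_of_pair_eq [DecidableEq V] {G : SimpleGraph V} {u v u' v' : V}
    (h : G.Adj u' v') (he : ({u, v} : Finset V) = {u', v'}) : G.Adj u v := by
  have he' := congrArg ((↑) : Finset V → Set V) he
  rw [coe_pair, coe_pair, Set.pair_eq_pair_iff] at he'
  rcases he' with ⟨rfl, rfl⟩ | ⟨rfl, rfl⟩
  exacts [h, h.symm]

lemma SimpleGraph.exists_sup_adj_pair_iff [DecidableEq V] (G₁ G₂ : SimpleGraph V)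
    (s : Finset V) :
    (∃ u v, (G₁ ⊔ G₂).Adj u v ∧ s = {u, v}) ↔
      (∃ u v, G₁.Adj u v ∧ s = {u, v}) ∨ ∃ u v, G₂.Adj u v ∧ s = {u, v} := by
  simp only [SimpleGraph.sup_adj, or_and_right, exists_or]

lemma SimpleGraph.not_exists_adj_pair_of_disjoint [DecidableEq V] {G₁ G₂ : SimpleGraph V}
    (hdisj : Disjoint G₁ G₂) {s : Finset V} (h₁ : ∃ u v, G₁.Adj u v ∧ s = {u, v}) :
    ¬∃ u v, G₂.Adj u v ∧ s = {u, v} := by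
  rintro ⟨u', v', h₂, rfl⟩
  obtain ⟨u, v, h₁, he⟩ := h₁
  exact SimpleGraph.disjoint_left.mp hdisj u v h₁ (SimpleGraph.adj_of_pair_eq h₂ he.symm)

lemma SimpleGraph.card_filter_edgeFinset_sup {G₁ G₂ : SimpleGraph V} [Fintype G₁.edgeSet]
    [Fintype G₂.edgeSet] [Fintype (G₁ ⊔ G₂).edgeSet] (hdisj : Disjoint G₁ G₂)
    (p : Sym2 V → Prop) [DecidablePred p] :
    #((G₁ ⊔ G₂).edgeFinset.filter p) = #(G₁.edgeFinset.filter p) + #(G₂.edgeFinset.filter p) := by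
  classical
  rw [SimpleGraph.edgeFinset_sup, filter_union, card_union_of_disjoint]
  exact disjoint_filter_filter (SimpleGraph.disjoint_edgeFinset.mpr hdisj)

variable [LinearOrder V]

lemma signPair_comm (σ τ : Finset V) : signPair τ σ = signPair σ τ := by
  rw [signPair, signPair, inter_comm, symmDiff_comm]

variable [Fintype V]

lemma isHermitian_Mk (G : SimpleGraph V) (k : ℕ) : (Mk G k).IsHermitian := by
  ext σ τ
  by_cases hστ : σ = τ
  · subst hστ
    rfl
  · simp only [Matrix.conjTranspose_apply, star_trivial, Mk, if_neg hστ, if_neg (Ne.symm hστ)]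
    rw [symmDiff_comm τ.val, signPair_comm τ.val]

open Classical in
lemma Mk_sup {G₁ G₂ : SimpleGraph V} (hdisj : Disjoint G₁ G₂) (k : ℕ) :
    Mk (G₁ ⊔ G₂) k = Mk G₁ k + Mk G₂ k := by
  ext σ τ
  by_cases hστ : σ = τ
  · simp only [Mk, Matrix.add_apply, if_pos hστ]
    rw [← Nat.cast_add]
    congr 1
    convert SimpleGraph.card_filter_edgeFinset_sup hdisj _
  · simp only [Mk, Matrix.add_apply, if_neg hστ, SimpleGraph.exists_sup_adj_pair_iff]
    by_cases h₁ : ∃ u v, G₁.Adj u v ∧ σ.val ∆ τ.val = {u, v}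
    · simp [h₁, SimpleGraph.not_exists_adj_pair_of_disjoint hdisj h₁]
    · simp [h₁]

open Classical in
lemma tEps_eq_maxEigenvalue_sub_ncard (G : SimpleGraph V) (k : ℕ) :
    tEps G k = maxEigenvalue (Mk G k) - G.edgeSet.ncard := by
  rw [tEps, ← SimpleGraph.coe_edgeFinset, Set.ncard_coe_finset]

end Graph

theorem stmt_10_general {V : Type*} [Fintype V] [LinearOrder V] (k : ℕ) (G₁ G₂ : SimpleGraph V)
    (hdisj : Disjoint G₁.edgeSet G₂.edgeSet) :
    tEps (G₁ ⊔ G₂) k ≤ tEps G₁ k + tEps G₂ k := by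
  have hM : maxEigenvalue (Mk (G₁ ⊔ G₂) k) ≤ maxEigenvalue (Mk G₁ k) + maxEigenvalue (Mk G₂ k) :=
    Mk_sup (SimpleGraph.disjoint_edgeSet.mp hdisj) k ▸
      maxEigenvalue_add_le (isHermitian_Mk G₁ k) (isHermitian_Mk G₂ k)
  rw [tEps_eq_maxEigenvalue_sub_ncard, tEps_eq_maxEigenvalue_sub_ncard,
    tEps_eq_maxEigenvalue_sub_ncard, SimpleGraph.edgeSet_sup, Set.ncard_union_eq hdisj]
  push_cast
  linarith

theorem stmt_10 {V : Type*} [Fintype V] [LinearOrder V] (k : ℕ) (hk1 : 1 ≤ k)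
    (hkn : k ≤ Fintype.card V) (G₁ G₂ : SimpleGraph V)
    (hdisj : Disjoint G₁.edgeSet G₂.edgeSet) :
    tEps (G₁ ⊔ G₂) k ≤ tEps G₁ k + tEps G₂ k :=
  stmt_10_general k G₁ G₂ hdisj
end

section
/- Let t ≥ k ≥ 1, let V be a finite linearly ordered set with |V| ≥ 2t, and let G ∈ ℳ_t(V). Then ε̃_k(G) = 2k − t; equivalently, the largest eigenvalue of M_k(G) equals 2k. -/
open Finset
open scoped symmDiff

namespace Stmt14
variable {V : Type*} [LinearOrder V]

def emin (e : Sym2 V) : V := Sym2.lift ⟨fun x y => min x y, fun _ _ => min_comm _ _⟩ e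
def emax (e : Sym2 V) : V := Sym2.lift ⟨fun x y => max x y, fun _ _ => max_comm _ _⟩ e

@[simp] lemma emin_mk (x y : V) : emin s(x, y) = min x y := rfl
@[simp] lemma emax_mk (x y : V) : emax s(x, y) = max x y := rfl

lemma emin_mem (e : Sym2 V) : emin e ∈ e := by
  induction e with
  | _ x y => rcases min_choice x y with h | h <;> simp [h]

lemma emax_mem (e : Sym2 V) : emax e ∈ e := by
  induction e with
  | _ x y => rcases max_choice x y with h | h <;> simp [h]

lemma mem_iff_minmax {e : Sym2 V} {v : V} : v ∈ e ↔ v = emin e ∨ v = emax e := by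
  induction e with
  | _ x y =>
    simp only [Sym2.mem_iff, emin_mk, emax_mk]
    rcases le_total x y with h | h <;> simp [min_eq_left, max_eq_right, min_eq_right,
      max_eq_left, h] <;> tauto

lemma emin_lt_emax {e : Sym2 V} (h : ¬ e.IsDiag) : emin e < emax e := by
  induction e with
  | _ x y =>
    simp only [Sym2.isDiag_iff_proj_eq] at h
    rcases lt_or_gt_of_ne h with h' | h'
    · simpa [min_def, max_def, le_of_lt h', not_le.2 h'] using h'
    · simpa [min_def, max_def, le_of_lt h', not_le.2 h'] using h'
  
lemma emin_le_emax (e : Sym2 V) : emin e ≤ emax e := by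
  induction e with
  | _ x y => simp [min_le_max]

end Stmt14

namespace Stmt14
variable {V : Type*} [LinearOrder V]

lemma inter_swap {σ : Finset V} {v w : V} (hv : v ∈ σ) (hw : w ∉ σ) :
    σ ∩ insert w (σ.erase v) = σ.erase v := by
  ext x
  simp only [Finset.mem_inter, Finset.mem_insert, Finset.mem_erase]
  constructor
  · rintro ⟨hx, rfl | hx2⟩
    · exact absurd hx hw
    · exact ⟨hx2.1, hx⟩
  · rintro ⟨hx1, hx2⟩; exact ⟨hx2, Or.inr ⟨hx1, hx2⟩⟩

lemma symmDiff_swap {σ : Finset V} {v w : V} (hv : v ∈ σ) (hw : w ∉ σ) :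
    σ ∆ insert w (σ.erase v) = {v, w} := by
  have hvw : v ≠ w := fun h => hw (h ▸ hv)
  ext x
  simp only [Finset.mem_symmDiff, Finset.mem_insert, Finset.mem_erase, Finset.mem_singleton]
  by_cases h1 : x = v <;> by_cases h2 : x = w <;> simp_all <;> tauto

lemma signPair_swap {σ : Finset V} {v w : V} (hv : v ∈ σ) (hw : w ∉ σ) {a b : V}
    (hab : a < b) (hset : ({v, w} : Finset V) = {a, b}) :
    signPair σ (insert w (σ.erase v)) =
      (-1 : ℝ) ^ ((σ.erase v).filter fun x => a < x ∧ x < b).card := by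
  unfold signPair
  rw [inter_swap hv hw, symmDiff_swap hv hw, hset]
  congr 1
  apply congrArg Finset.card
  apply Finset.filter_congr
  intro x _
  simp only [Finset.mem_insert, Finset.mem_singleton]
  constructor
  · rintro ⟨⟨c, hc, hcx⟩, ⟨d, hd, hxd⟩⟩
    refine ⟨?_, ?_⟩
    · rcases hc with rfl | rfl
      · exact hcx
      · exact hab.trans hcx
    · rcases hd with rfl | rfl
      · exact hxd.trans hab
      · exact hxd
  · rintro ⟨h1, h2⟩
    exact ⟨⟨a, Or.inl rfl, h1⟩, ⟨b, Or.inr rfl, h2⟩⟩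

lemma interval_parity {a b x y : V} (hab : a < b) (hxy : x < y) (hax : a ≠ x)
    (hay : a ≠ y) (hbx : b ≠ x) (hby : b ≠ y) :
    ((if a < y ∧ y < b then 1 else 0) + (if a < x ∧ x < b then 1 else 0)
      + (if a < x ∧ x < b ∧ b < y then 1 else 0)
      + (if x < a ∧ a < y ∧ y < b then 1 else 0)) % 2 = 0 := by
  rcases hax.lt_or_gt with h1 | h1
  · rcases hbx.lt_or_gt with h2 | h2
    · have n1 : ¬ y < b := not_lt.2 (h2.trans hxy).le
      have n2 : ¬ x < b := not_lt.2 h2.le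
      have n3 : ¬ x < a := not_lt.2 h1.le
      simp [n1, n2, n3]
    · rcases hby.lt_or_gt with h3 | h3
      · have n1 : ¬ y < b := not_lt.2 h3.le
        have n3 : ¬ x < a := not_lt.2 h1.le
        simp [n1, n3, h1, h2, h3]
      · have hay' : a < y := h1.trans hxy
        have n4 : ¬ b < y := not_lt.2 h3.le
        have n3 : ¬ x < a := not_lt.2 h1.le
        simp [hay', h3, h1, h2, n4, n3]
  · rcases hay.lt_or_gt with h2 | h2
    · rcases hby.lt_or_gt with h3 | h3
      · have n1 : ¬ y < b := not_lt.2 h3.le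
        have n2 : ¬ a < x := not_lt.2 h1.le
        simp [n1, n2]
      · have n2 : ¬ a < x := not_lt.2 h1.le
        simp [n2, h1, h2, h3]
    · have n1 : ¬ a < y := not_lt.2 h2.le
      have n2 : ¬ a < x := not_lt.2 h1.le
      simp [n1, n2]

lemma card_filter_product_insert {α : Type*} [DecidableEq α] (T : Finset α) (e₀ : α)
    (he : e₀ ∉ T) (p : α → α → Prop) [∀ a b : α, Decidable (p a b)] (hp : ¬ p e₀ e₀) :
    ((insert e₀ T ×ˢ insert e₀ T).filter fun q => p q.1 q.2).card =
      ((T ×ˢ T).filter fun q => p q.1 q.2).card + (T.filter fun e => p e₀ e).card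
        + (T.filter fun e => p e e₀).card := by
  simp only [Finset.card_filter, Finset.sum_product, Finset.sum_insert he, hp, if_false,
    Finset.sum_add_distrib]
  ring


lemma sym2_eq_minmax (e : Sym2 V) : e = s(emin e, emax e) := by
  induction e with
  | _ x y =>
    rcases le_total x y with h | h
    · simp [min_eq_left h, max_eq_right h]
    · rw [Sym2.eq_swap]
      simp [min_eq_right h, max_eq_left h]
      exact Or.inl h

lemma symmDiff_pair_cases {σ τ : Finset V} (hcard : σ.card = τ.card) {v w : V}
    (hvw : v ≠ w) (h : σ ∆ τ = {v, w}) :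
    (v ∈ σ ∧ v ∉ τ ∧ w ∈ τ ∧ w ∉ σ) ∨ (w ∈ σ ∧ w ∉ τ ∧ v ∈ τ ∧ v ∉ σ) := by
  have hv : v ∈ σ ∆ τ := by rw [h]; simp
  have hw : w ∈ σ ∆ τ := by rw [h]; simp
  rw [Finset.mem_symmDiff] at hv hw
  have hne : σ ≠ τ := by
    intro hst
    rw [hst, symmDiff_self] at h
    have : v ∈ (⊥ : Finset V) := by rw [h]; simp
    simp at this
  rcases hv with ⟨hv1, hv2⟩ | ⟨hv1, hv2⟩ <;> rcases hw with ⟨hw1, hw2⟩ | ⟨hw1, hw2⟩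
  · exfalso
    apply hne
    symm
    apply Finset.eq_of_subset_of_card_le _ hcard.le
    intro x hx
    by_contra hxσ
    have hmem : x ∈ σ ∆ τ := Finset.mem_symmDiff.2 (Or.inr ⟨hx, hxσ⟩)
    rw [h] at hmem
    rcases Finset.mem_insert.1 hmem with rfl | h'
    · exact hv2 hx
    · rw [Finset.mem_singleton] at h'
      subst h'
      exact hw2 hx
  · exact Or.inl ⟨hv1, hv2, hw1, hw2⟩
  · exact Or.inr ⟨hw1, hw2, hv1, hv2⟩
  · exfalso
    apply hne
    apply Finset.eq_of_subset_of_card_le _ hcard.ge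
    intro x hx
    by_contra hxτ
    have hmem : x ∈ σ ∆ τ := Finset.mem_symmDiff.2 (Or.inl ⟨hx, hxτ⟩)
    rw [h] at hmem
    rcases Finset.mem_insert.1 hmem with rfl | h'
    · exact hv2 hx
    · rw [Finset.mem_singleton] at h'
      subst h'
      exact hw2 hx

lemma eq_insert_erase_of_symmDiff {σ τ : Finset V} {v w : V} (h : σ ∆ τ = {v, w})
    (hv : v ∈ σ) (hv' : v ∉ τ) (hw : w ∈ τ) (hw' : w ∉ σ) :
    τ = insert w (σ.erase v) := by
  have hvw : v ≠ w := fun hh => hw' (hh ▸ hv)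
  ext x
  have hx : x ∈ σ ∆ τ ↔ (x = v ∨ x = w) := by rw [h]; simp
  rw [Finset.mem_symmDiff] at hx
  simp only [Finset.mem_insert, Finset.mem_erase]
  by_cases h1 : x = v
  · subst h1; simp [hv', hv, hvw]
  · by_cases h2 : x = w
    · subst h2; simp [hw]
    · simp only [h1, h2, or_self, iff_false, not_or, not_and, not_not] at hx
      simp only [h2, false_or]
      exact ⟨fun hxτ => ⟨h1, hx.2 hxτ⟩, fun hh => hx.1 hh.2⟩

lemma negpow_mod {m n : ℕ} (h : m % 2 = n % 2) : ((-1 : ℝ)) ^ m = (-1) ^ n := by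
  rw [neg_one_pow_eq_pow_mod_two, h, ← neg_one_pow_eq_pow_mod_two]

end Stmt14

namespace Stmt14
section Matching
open Classical
variable {V : Type*} [LinearOrder V] (E₀ : Finset (Sym2 V))

/-- Transversal: every vertex lies on a chosen edge, and each chosen edge has
exactly one endpoint in σ. -/
def Trans (σ : Finset V) : Prop :=
  (∀ v ∈ σ, ∃ e ∈ E₀, v ∈ e) ∧
    ∀ e ∈ E₀, (emin e ∈ σ ∧ emax e ∉ σ) ∨ (emax e ∈ σ ∧ emin e ∉ σ)

noncomputable def Hc (e : Sym2 V) : ℕ :=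
  (E₀.filter fun e' => emin e < emin e' ∧ emin e' < emax e).card

noncomputable def Tb (σ : Finset V) : Finset (Sym2 V) := E₀.filter fun e => emax e ∈ σ

noncomputable def fpar (σ : Finset V) : ℕ :=
  (∑ e ∈ Tb E₀ σ, (1 + Hc E₀ e)) +
  ((Tb E₀ σ ×ˢ Tb E₀ σ).filter fun p =>
    emin p.1 < emin p.2 ∧ emin p.2 < emax p.1 ∧ emax p.1 < emax p.2).card

variable {E₀}
variable (hpd : ∀ e₁ ∈ E₀, ∀ e₂ ∈ E₀, e₁ ≠ e₂ → ∀ v : V, ¬(v ∈ e₁ ∧ v ∈ e₂))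

include hpd in
lemma edge_eq_of_mem {e₁ e₂ : Sym2 V} {v : V} (h1 : e₁ ∈ E₀) (h2 : e₂ ∈ E₀)
    (hv1 : v ∈ e₁) (hv2 : v ∈ e₂) : e₁ = e₂ := by
  by_contra h
  exact hpd e₁ h1 e₂ h2 h v ⟨hv1, hv2⟩

lemma pair_eq_minmax {e : Sym2 V} {v w : V} (hv : v ∈ e) (hw : w ∈ e) (hvw : v ≠ w) :
    (v = emin e ∧ w = emax e) ∨ (v = emax e ∧ w = emin e) := by
  rcases mem_iff_minmax.1 hv with h | h <;> rcases mem_iff_minmax.1 hw with h' | h' <;>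
    first | (exact absurd (h.trans h'.symm) hvw) | tauto

lemma trans_exists_endpoint {σ : Finset V} (hσ : Trans E₀ σ) {e : Sym2 V} (he : e ∈ E₀) :
    ∃ v ∈ σ, v ∈ e := by
  rcases hσ.2 e he with ⟨h, _⟩ | ⟨h, _⟩
  · exact ⟨emin e, h, emin_mem e⟩
  · exact ⟨emax e, h, emax_mem e⟩

lemma trans_unique_in_edge {σ : Finset V} (hσ : Trans E₀ σ) {e : Sym2 V} (he : e ∈ E₀)
    {v w : V} (hvσ : v ∈ σ) (hve : v ∈ e) (hwσ : w ∈ σ) (hwe : w ∈ e) : v = w := by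
  by_contra hvw
  rcases pair_eq_minmax hve hwe hvw with ⟨h1, h2⟩ | ⟨h1, h2⟩ <;>
    rcases hσ.2 e he with ⟨_, h4⟩ | ⟨_, h4⟩ <;>
      first
        | exact h4 (h2 ▸ hwσ)
        | exact h4 (h1 ▸ hvσ)

include hpd in
lemma trans_swap {σ : Finset V} (hσ : Trans E₀ σ) {e₀ : Sym2 V} (he : e₀ ∈ E₀)
    {v w : V} (hv : v ∈ e₀) (hw : w ∈ e₀) (hvw : v ≠ w) (hvσ : v ∈ σ) :
    w ∉ σ ∧ Trans E₀ (insert w (σ.erase v)) := by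
  have hwσ : w ∉ σ := fun hwσ => hvw (trans_unique_in_edge hσ he hvσ hv hwσ hw)
  refine ⟨hwσ, ?_, ?_⟩
  · intro u hu
    rcases Finset.mem_insert.1 hu with rfl | hu
    · exact ⟨e₀, he, hw⟩
    · exact hσ.1 u (Finset.mem_erase.1 hu).2
  · intro e heE
    by_cases h : e = e₀
    · subst h
      rcases pair_eq_minmax hv hw hvw with ⟨h1, h2⟩ | ⟨h1, h2⟩
      · subst h1; subst h2
        right
        simp [Finset.mem_insert, Finset.mem_erase, hvw, Ne.symm hvw]
      · subst h1; subst h2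
        left
        simp [Finset.mem_insert, Finset.mem_erase, hvw, Ne.symm hvw]
    · have hne : ∀ u, u ∈ e → u ≠ v ∧ u ≠ w := by
        intro u hu
        constructor <;> rintro rfl
        · exact hpd e heE e₀ he h u ⟨hu, hv⟩
        · exact hpd e heE e₀ he h u ⟨hu, hw⟩
      have h1 := (hne _ (emin_mem e))
      have h2 := (hne _ (emax_mem e))
      have : ∀ u, u ≠ v → u ≠ w → (u ∈ insert w (σ.erase v) ↔ u ∈ σ) := by
        intro u hu1 hu2
        simp [Finset.mem_insert, Finset.mem_erase, hu1, hu2]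
      rw [this _ h1.1 h1.2, this _ h2.1 h2.2]
      exact hσ.2 e heE

noncomputable def chosen (σ : Finset V) (e : Sym2 V) : V :=
  if emax e ∈ σ then emax e else emin e

lemma chosen_mem_edge (σ : Finset V) (e : Sym2 V) : chosen σ e ∈ e := by
  unfold chosen; split
  · exact emax_mem e
  · exact emin_mem e

lemma chosen_mem {σ : Finset V} (hσ : Trans E₀ σ) {e : Sym2 V} (he : e ∈ E₀) :
    chosen σ e ∈ σ := by
  unfold chosen; split
  · assumption
  · rcases hσ.2 e he with ⟨h1, _⟩ | ⟨h1, _⟩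
    · exact h1
    · tauto

lemma chosen_eq {σ : Finset V} (hσ : Trans E₀ σ) {e : Sym2 V} (he : e ∈ E₀)
    {x : V} (hx : x ∈ σ) (hxe : x ∈ e) : chosen σ e = x :=
  trans_unique_in_edge hσ he (chosen_mem hσ he) (chosen_mem_edge σ e) hx hxe


variable (hnd : ∀ e ∈ E₀, ¬ e.IsDiag)

include hpd hnd in
lemma fpar_swap {σ : Finset V} (hσ : Trans E₀ σ) {e₀ : Sym2 V} (he : e₀ ∈ E₀)
    (haσ : emin e₀ ∈ σ) :
    fpar E₀ (insert (emax e₀) (σ.erase (emin e₀))) % 2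
      = (fpar E₀ σ + 1
          + ((σ.erase (emin e₀)).filter fun x => emin e₀ < x ∧ x < emax e₀).card) % 2 := by
  have hab : emin e₀ < emax e₀ := emin_lt_emax (hnd e₀ he)
  have hb : emax e₀ ∉ σ := by
    rcases hσ.2 e₀ he with ⟨_, h⟩ | ⟨_, h⟩
    · exact h
    · exact absurd haσ h
  have he₀T : e₀ ∉ Tb E₀ σ := by simp [Tb, hb]
  have hT : Tb E₀ (insert (emax e₀) (σ.erase (emin e₀))) = insert e₀ (Tb E₀ σ) := by
    ext e
    simp only [Tb, Finset.mem_filter, Finset.mem_insert, Finset.mem_erase]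
    constructor
    · rintro ⟨heE, h | ⟨h1, h2⟩⟩
      · exact Or.inl (edge_eq_of_mem hpd heE he (h ▸ emax_mem e) (emax_mem e₀))
      · exact Or.inr ⟨heE, h2⟩
    · rintro (rfl | ⟨heE, h2⟩)
      · exact ⟨he, Or.inl rfl⟩
      · refine ⟨heE, Or.inr ⟨fun hcontra => ?_, h2⟩⟩
        have he0 : e = e₀ := edge_eq_of_mem hpd heE he (hcontra ▸ emax_mem e) (emin_mem e₀)
        rw [he0] at h2
        exact hb h2
  have hC := card_filter_product_insert (Tb E₀ σ) e₀ he₀T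
      (fun e e' => emin e < emin e' ∧ emin e' < emax e ∧ emax e < emax e')
      (by simp)
  have hfτ : fpar E₀ (insert (emax e₀) (σ.erase (emin e₀)))
      = (1 + Hc E₀ e₀) + fpar E₀ σ
        + ((Tb E₀ σ).filter fun e =>
            emin e₀ < emin e ∧ emin e < emax e₀ ∧ emax e₀ < emax e).card
        + ((Tb E₀ σ).filter fun e =>
            emin e < emin e₀ ∧ emin e₀ < emax e ∧ emax e < emax e₀).card := by
    unfold fpar
    rw [hT, Finset.sum_insert he₀T]
    simp only [hC]
    ring
  -- distinctness of endpoints of distinct edges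
  have hdist : ∀ e ∈ E₀.erase e₀, emin e₀ ≠ emin e ∧ emin e₀ ≠ emax e
      ∧ emax e₀ ≠ emin e ∧ emax e₀ ≠ emax e := by
    intro e heE'
    obtain ⟨hne, heE⟩ := Finset.mem_erase.1 heE'
    refine ⟨?_, ?_, ?_, ?_⟩ <;> intro hcontra
    · exact hne (edge_eq_of_mem hpd heE he (by rw [hcontra]; exact emin_mem e) (emin_mem e₀))
    · exact hne (edge_eq_of_mem hpd heE he (by rw [hcontra]; exact emax_mem e) (emin_mem e₀))
    · exact hne (edge_eq_of_mem hpd heE he (by rw [hcontra]; exact emin_mem e) (emax_mem e₀))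
    · exact hne (edge_eq_of_mem hpd heE he (by rw [hcontra]; exact emax_mem e) (emax_mem e₀))
  -- express c as a count over edges
  have hcbij : ((E₀.erase e₀).filter fun e =>
        emin e₀ < chosen σ e ∧ chosen σ e < emax e₀).card
      = ((σ.erase (emin e₀)).filter fun x => emin e₀ < x ∧ x < emax e₀).card := by
    apply Finset.card_bij (fun e _ => chosen σ e)
    · intro e heF
      obtain ⟨heE', hlt⟩ := Finset.mem_filter.1 heF
      obtain ⟨hne, heE⟩ := Finset.mem_erase.1 heE'
      refine Finset.mem_filter.2 ⟨Finset.mem_erase.2 ⟨?_, chosen_mem hσ heE⟩, hlt⟩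
      intro hcontra
      exact hne (edge_eq_of_mem hpd heE he (hcontra ▸ chosen_mem_edge σ e) (emin_mem e₀))
    · intro e1 h1 e2 h2 hceq
      exact edge_eq_of_mem hpd (Finset.mem_erase.1 (Finset.mem_filter.1 h1).1).2
        (Finset.mem_erase.1 (Finset.mem_filter.1 h2).1).2
        (chosen_mem_edge σ e1) (hceq ▸ chosen_mem_edge σ e2)
    · intro x hxF
      obtain ⟨hxe, hlt⟩ := Finset.mem_filter.1 hxF
      obtain ⟨hxne, hxσ⟩ := Finset.mem_erase.1 hxe
      obtain ⟨e, heE, hxe'⟩ := hσ.1 x hxσ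
      have hne : e ≠ e₀ := by
        rintro rfl
        rcases mem_iff_minmax.1 hxe' with h | h
        · exact hxne h
        · rw [h] at hxσ; exact hb hxσ
      have hch : chosen σ e = x := chosen_eq hσ heE hxσ hxe'
      refine ⟨e, Finset.mem_filter.2 ⟨Finset.mem_erase.2 ⟨hne, heE⟩, ?_⟩, hch⟩
      rw [hch]; exact hlt
  -- rewrite the three other counts over E₀.erase e₀
  have hHc : Hc E₀ e₀ = ((E₀.erase e₀).filter fun e =>
      emin e₀ < emin e ∧ emin e < emax e₀).card := by
    unfold Hc
    rw [Finset.filter_erase]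
    rw [Finset.erase_eq_of_notMem]
    simp
  have hAe : ((Tb E₀ σ).filter fun e =>
        emin e₀ < emin e ∧ emin e < emax e₀ ∧ emax e₀ < emax e)
      = ((E₀.erase e₀).filter fun e => emax e ∈ σ ∧
          (emin e₀ < emin e ∧ emin e < emax e₀ ∧ emax e₀ < emax e)) := by
    unfold Tb
    rw [Finset.filter_filter, Finset.filter_erase, Finset.erase_eq_of_notMem]
    simp [hb]
  have hBe : ((Tb E₀ σ).filter fun e =>
        emin e < emin e₀ ∧ emin e₀ < emax e ∧ emax e < emax e₀)
      = ((E₀.erase e₀).filter fun e => emax e ∈ σ ∧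
          (emin e < emin e₀ ∧ emin e₀ < emax e ∧ emax e < emax e₀)) := by
    unfold Tb
    rw [Finset.filter_filter, Finset.filter_erase, Finset.erase_eq_of_notMem]
    simp [hb]
  -- termwise parity
  have hterm : ∀ e ∈ E₀.erase e₀,
      ((if emin e₀ < chosen σ e ∧ chosen σ e < emax e₀ then 1 else 0)
        + (if emin e₀ < emin e ∧ emin e < emax e₀ then 1 else 0)
        + (if emax e ∈ σ ∧ (emin e₀ < emin e ∧ emin e < emax e₀ ∧ emax e₀ < emax e) then 1 else 0)
        + (if emax e ∈ σ ∧ (emin e < emin e₀ ∧ emin e₀ < emax e ∧ emax e < emax e₀) then 1 else 0)) % 2 = 0 := by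
    intro e heE'
    obtain ⟨h1, h2, h3, h4⟩ := hdist e heE'
    have hxy : emin e < emax e := emin_lt_emax (hnd e (Finset.mem_erase.1 heE').2)
    by_cases hy : emax e ∈ σ
    · have hch : chosen σ e = emax e := if_pos hy
      rw [hch]
      simp only [hy, true_and]
      exact interval_parity hab hxy h1 h2 h3 h4
    · have hch : chosen σ e = emin e := if_neg hy
      rw [hch]
      simp only [hy, false_and, if_false]
      by_cases hP : emin e₀ < emin e ∧ emin e < emax e₀ <;> simp [hP]
  -- key parity identity
  have hkey : (((σ.erase (emin e₀)).filter fun x => emin e₀ < x ∧ x < emax e₀).card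
      + Hc E₀ e₀
      + ((Tb E₀ σ).filter fun e =>
          emin e₀ < emin e ∧ emin e < emax e₀ ∧ emax e₀ < emax e).card
      + ((Tb E₀ σ).filter fun e =>
          emin e < emin e₀ ∧ emin e₀ < emax e ∧ emax e < emax e₀).card) % 2 = 0 := by
    rw [← hcbij, hHc, hAe, hBe]
    simp only [Finset.card_filter]
    rw [← Finset.sum_add_distrib, ← Finset.sum_add_distrib, ← Finset.sum_add_distrib]
    rw [Finset.sum_nat_mod]
    rw [Finset.sum_congr rfl hterm]
    simp
  omega

include hpd hnd in
lemma xswap {σ : Finset V} (hσ : Trans E₀ σ) {e₀ : Sym2 V} (he : e₀ ∈ E₀)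
    {v w : V} (hv : v ∈ e₀) (hw : w ∈ e₀) (hvw : v ≠ w) (hvσ : v ∈ σ) :
    (-1 : ℝ) ^ fpar E₀ (insert w (σ.erase v))
      = - signPair σ (insert w (σ.erase v)) * (-1) ^ fpar E₀ σ := by
  have hwσ : w ∉ σ := (trans_swap hpd hσ he hv hw hvw hvσ).1
  have hab : emin e₀ < emax e₀ := emin_lt_emax (hnd e₀ he)
  rcases pair_eq_minmax hv hw hvw with ⟨h1, h2⟩ | ⟨h1, h2⟩
  · subst h1; subst h2
    have hsp := signPair_swap hvσ hwσ hab rfl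
    have hfp := fpar_swap hpd hnd hσ he hvσ
    rw [hsp, negpow_mod hfp, pow_add, pow_add]
    ring
  · -- v = emax e₀, w = emin e₀; apply fpar_swap to the swapped set
    subst h1; subst h2
    have hσ' := (trans_swap hpd hσ he hv hw hvw hvσ).2
    have hw'σ' : emin e₀ ∈ insert (emin e₀) (σ.erase (emax e₀)) := Finset.mem_insert_self _ _
    have hback : insert (emax e₀) ((insert (emin e₀) (σ.erase (emax e₀))).erase (emin e₀)) = σ := by
      rw [Finset.erase_insert (by simp [Finset.mem_erase, hvw.symm, hwσ]), Finset.insert_erase hvσ]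
    have herase : (insert (emin e₀) (σ.erase (emax e₀))).erase (emin e₀) = σ.erase (emax e₀) := by
      rw [Finset.erase_insert (by simp [Finset.mem_erase, hvw.symm, hwσ])]
    have hfp := fpar_swap hpd hnd hσ' he hw'σ'
    rw [hback, herase] at hfp
    have hsp := signPair_swap hvσ hwσ hab (Finset.pair_comm _ _)
    rw [hsp]
    have : fpar E₀ (insert (emin e₀) (σ.erase (emax e₀))) % 2
        = (fpar E₀ σ + 1 + ((σ.erase (emax e₀)).filter fun x =>
            emin e₀ < x ∧ x < emax e₀).card) % 2 := by omega
    rw [negpow_mod this, pow_add, pow_add]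
    ring

end Matching
end Stmt14

namespace Stmt14
section Mat
open Classical
variable {V : Type*} [Fintype V] [LinearOrder V] {G : SimpleGraph V} {k : ℕ}
  {E₀ : Finset (Sym2 V)}

/-- the endpoint of `e` NOT in σ (for transversals) -/
noncomputable def other (σ : Finset V) (e : Sym2 V) : V :=
  if emax e ∈ σ then emin e else emax e

lemma other_mem_edge (σ : Finset V) (e : Sym2 V) : other σ e ∈ e := by
  unfold other; split
  · exact emin_mem e
  · exact emax_mem e

lemma other_notMem {σ : Finset V} (hσ : Trans E₀ σ) {e : Sym2 V} (he : e ∈ E₀) :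
    other σ e ∉ σ := by
  unfold other; split
  · rcases hσ.2 e he with ⟨_, h⟩ | ⟨h1, h2⟩
    · intro hc; exact h (by assumption)
    · exact h2
  · rcases hσ.2 e he with ⟨h1, h2⟩ | ⟨h1, h2⟩
    · exact h2
    · intro _; exact (by assumption : emax e ∉ σ) h1

lemma chosen_ne_other {σ : Finset V} {e : Sym2 V} (hnd : ¬ e.IsDiag) :
    chosen σ e ≠ other σ e := by
  have h := emin_lt_emax hnd
  unfold chosen other; split
  · exact h.ne'
  · exact h.ne

lemma pair_chosen_other {σ : Finset V} (e : Sym2 V) :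
    ({chosen σ e, other σ e} : Finset V) = {emin e, emax e} := by
  unfold chosen other; split
  · rw [Finset.pair_comm]
  · rfl

variable (hsub : E₀ ⊆ G.edgeFinset)
  (hdisj : ∀ e₁ ∈ G.edgeSet, ∀ e₂ ∈ G.edgeSet, e₁ ≠ e₂ → ∀ v : V, ¬(v ∈ e₁ ∧ v ∈ e₂))

include hsub hdisj in
lemma hpd_of : ∀ e₁ ∈ E₀, ∀ e₂ ∈ E₀, e₁ ≠ e₂ → ∀ v : V, ¬(v ∈ e₁ ∧ v ∈ e₂) :=
  fun e₁ h1 e₂ h2 hne v => hdisj e₁ (SimpleGraph.mem_edgeFinset.1 (hsub h1))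
    e₂ (SimpleGraph.mem_edgeFinset.1 (hsub h2)) hne v

include hsub in
lemma hnd_of : ∀ e ∈ E₀, ¬ e.IsDiag := fun e he =>
  G.not_isDiag_of_mem_edgeSet (SimpleGraph.mem_edgeFinset.1 (hsub he))

include hsub in
lemma adj_minmax {e : Sym2 V} (he : e ∈ E₀) : G.Adj (emin e) (emax e) := by
  have h1 : e ∈ G.edgeSet := SimpleGraph.mem_edgeFinset.1 (hsub he)
  rw [sym2_eq_minmax e] at h1
  exact G.mem_edgeSet.1 h1

include hsub hdisj in
lemma edge_of_mem_both {e : Sym2 V} (he : e ∈ E₀) {u v : V} (huv : G.Adj u v)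
    (hv : v ∈ e) : s(u, v) ∈ E₀ := by
  have h1 : s(u, v) ∈ G.edgeSet := G.mem_edgeSet.2 huv
  have h2 : e ∈ G.edgeSet := SimpleGraph.mem_edgeFinset.1 (hsub he)
  have : e = s(u, v) := by
    by_contra hne
    exact hdisj e h2 _ h1 hne v ⟨hv, Sym2.mem_mk_right u v⟩
  exact this ▸ he

include hsub hdisj in
lemma neighbor_struct {σ τ : Finset V} (hτ : Trans E₀ τ) (hcard : σ.card = τ.card)
    {u v : V} (huv : G.Adj u v) (hsd : σ ∆ τ = {u, v}) :
    ∃ e ∈ E₀, σ ∆ τ = {emin e, emax e} ∧ Trans E₀ σ := by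
  have hpd := hpd_of hsub hdisj
  rcases symmDiff_pair_cases hcard huv.ne hsd with ⟨hu1, hu2, hv1, hv2⟩ | ⟨hw1, hw2, hv1, hv2⟩
  · -- u ∈ σ \ τ, v ∈ τ \ σ
    have heE : s(u, v) ∈ E₀ := edge_of_mem_both hsub hdisj
      (hτ.1 v hv1).choose_spec.1 huv ((hτ.1 v hv1).choose_spec.2)
    have hσ : σ = insert u (τ.erase v) := by
      apply eq_insert_erase_of_symmDiff (v := v) (w := u) _ hv1 hv2 hu1 hu2
      rw [symmDiff_comm, hsd, Finset.pair_comm]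
    refine ⟨s(u, v), heE, ?_, ?_⟩
    · rw [hsd]
      have h1 : u ∈ s(u, v) := Sym2.mem_mk_left u v
      have h2 : v ∈ s(u, v) := Sym2.mem_mk_right u v
      rcases pair_eq_minmax h1 h2 huv.ne with ⟨ha, hb⟩ | ⟨ha, hb⟩
      · rw [← ha, ← hb]
      · rw [← ha, ← hb, Finset.pair_comm]
    · rw [hσ]
      exact (trans_swap hpd hτ heE (Sym2.mem_mk_right u v) (Sym2.mem_mk_left u v)
        huv.ne.symm hv1).2
  · -- v ∈ σ \ τ, u ∈ τ \ σ
    have heE : s(v, u) ∈ E₀ := edge_of_mem_both hsub hdisj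
      (hτ.1 u hv1).choose_spec.1 huv.symm ((hτ.1 u hv1).choose_spec.2)
    have hσ : σ = insert v (τ.erase u) := by
      apply eq_insert_erase_of_symmDiff (v := u) (w := v) _ hv1 hv2 hw1 hw2
      rw [symmDiff_comm, hsd, Finset.pair_comm]
    refine ⟨s(v, u), heE, ?_, ?_⟩
    · rw [hsd]
      have h1 : v ∈ s(v, u) := Sym2.mem_mk_left v u
      have h2 : u ∈ s(v, u) := Sym2.mem_mk_right v u
      rcases pair_eq_minmax h2 h1 huv.ne with ⟨ha, hb⟩ | ⟨ha, hb⟩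
      · rw [← ha, ← hb]
      · rw [← ha, ← hb, Finset.pair_comm]
    · rw [hσ]
      exact (trans_swap hpd hτ heE (Sym2.mem_mk_right v u) (Sym2.mem_mk_left v u)
        huv.ne hv1).2

noncomputable def xv (E₀ : Finset (Sym2 V)) (k : ℕ) : {s : Finset V // s.card = k} → ℝ :=
  fun σ => if Trans E₀ σ.val then (-1 : ℝ) ^ fpar E₀ σ.val else 0

include hsub hdisj in
lemma xv_ne (hk : E₀.card = k) : xv (V := V) E₀ k ≠ 0 := by
  have hpd := hpd_of hsub hdisj
  have hnd := hnd_of hsub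
  have hinj : Set.InjOn emin E₀ := fun e1 h1 e2 h2 hee =>
    edge_eq_of_mem hpd h1 h2 (emin_mem e1) (hee ▸ emin_mem e2)
  have hcard : (E₀.image emin).card = k := by
    rw [Finset.card_image_of_injOn hinj, hk]
  have hT : Trans E₀ (E₀.image emin) := by
    constructor
    · intro v hv
      obtain ⟨e, he, rfl⟩ := Finset.mem_image.1 hv
      exact ⟨e, he, emin_mem e⟩
    · intro e he
      left
      refine ⟨Finset.mem_image_of_mem _ he, ?_⟩
      intro hc
      obtain ⟨e', he', hee⟩ := Finset.mem_image.1 hc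
      have : e' = e := edge_eq_of_mem hpd he' he (hee ▸ emin_mem e') (emax_mem e)
      subst this
      exact (emin_lt_emax (hnd e' he)).ne hee
  intro hzero
  have h1 : xv E₀ k ⟨E₀.image emin, hcard⟩ = 0 := congrFun hzero _
  rw [xv, if_pos hT] at h1
  exact absurd h1 (by positivity)

include hsub hdisj in
lemma mulVec_xv (hk : E₀.card = k) :
    (Mk G k).mulVec (xv E₀ k) = ((2 * k : ℝ)) • (xv E₀ k) := by
  have hpd := hpd_of hsub hdisj
  have hnd := hnd_of hsub
  funext σ
  rw [Matrix.mulVec, Pi.smul_apply, smul_eq_mul]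
  show (∑ τ, Mk G k σ τ * xv E₀ k τ) = _
  by_cases hσ : Trans E₀ σ.val
  swap
  · have hx : xv E₀ k σ = 0 := if_neg hσ
    rw [hx, mul_zero]
    apply Finset.sum_eq_zero
    intro τ _
    by_cases hts : τ = σ
    · subst hts; rw [hx, mul_zero]
    · by_cases hxt : Trans E₀ τ.val
      · have hM : Mk G k σ τ = 0 := by
          simp only [Mk]
          rw [if_neg (fun h => hts h.symm), if_neg]
          rintro ⟨u, v, huv, hsd⟩
          obtain ⟨e, he, _, hTσ⟩ := neighbor_struct hsub hdisj hxt (σ.2.trans τ.2.symm) huv hsd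
          exact hσ hTσ
        rw [hM, zero_mul]
      · rw [show xv E₀ k τ = 0 from if_neg hxt, mul_zero]
  · have hx : xv E₀ k σ = (-1 : ℝ) ^ fpar E₀ σ.val := if_pos hσ
    have hdiag : Mk G k σ σ = (k : ℝ) := by
      simp only [Mk]
      rw [if_pos trivial]
      norm_cast
      refine Eq.trans ?_ hk
      apply congrArg Finset.card
      apply Finset.ext
      intro e
      rw [Finset.mem_filter]
      constructor
      · rintro ⟨heG, v, hvσ, hve⟩
        obtain ⟨e', he', hve'⟩ := hσ.1 v hvσ
        have : e = e' := by
          by_contra hne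
          exact hdisj e (SimpleGraph.mem_edgeFinset.1 heG) e'
            (SimpleGraph.mem_edgeFinset.1 (hsub he')) hne v ⟨hve, hve'⟩
        exact this ▸ he'
      · intro he
        obtain ⟨v, hv1, hv2⟩ := trans_exists_endpoint hσ he
        exact ⟨hsub he, v, hv1, hv2⟩
    have hterm : ∀ τ ∈ Finset.univ.erase σ,
        Mk G k σ τ * xv E₀ k τ =
          if Trans E₀ τ.val ∧ ∃ e ∈ E₀, σ.val ∆ τ.val = {emin e, emax e}
          then xv E₀ k σ else 0 := by
      intro τ hτe
      have hτσ : τ ≠ σ := (Finset.mem_erase.1 hτe).1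
      by_cases hp : Trans E₀ τ.val ∧ ∃ e ∈ E₀, σ.val ∆ τ.val = {emin e, emax e}
      · obtain ⟨hτT, e, he, hsd⟩ := hp
        have hab : emin e < emax e := emin_lt_emax (hnd e he)
        have hMστ : Mk G k σ τ = - signPair σ.val τ.val := by
          simp only [Mk]
          rw [if_neg (fun h => hτσ h.symm), if_pos]
          exact ⟨emin e, emax e, adj_minmax hsub he, hsd⟩
        have hsq : signPair σ.val τ.val * signPair σ.val τ.val = 1 := by
          rw [signPair, ← pow_add, ← two_mul, pow_mul, neg_one_sq, one_pow]
        rw [hMστ, if_pos ⟨hτT, e, he, hsd⟩,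
          show xv E₀ k τ = (-1 : ℝ) ^ fpar E₀ τ.val from if_pos hτT, hx]
        rcases symmDiff_pair_cases (σ.2.trans τ.2.symm) hab.ne hsd
          with ⟨h1, h2, h3, h4⟩ | ⟨h1, h2, h3, h4⟩
        · have hτval : τ.val = insert (emax e) (σ.val.erase (emin e)) :=
            eq_insert_erase_of_symmDiff hsd h1 h2 h3 h4
          have hxs := xswap hpd hnd hσ he (emin_mem e) (emax_mem e) hab.ne h1
          rw [← hτval] at hxs
          rw [hxs, neg_mul, neg_mul, mul_neg, neg_neg, ← mul_assoc, hsq, one_mul]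
        · have hsd' : σ.val ∆ τ.val = {emax e, emin e} := by rw [hsd, Finset.pair_comm]
          have hτval : τ.val = insert (emin e) (σ.val.erase (emax e)) :=
            eq_insert_erase_of_symmDiff hsd' h1 h2 h3 h4
          have hxs := xswap hpd hnd hσ he (emax_mem e) (emin_mem e) hab.ne' h1
          rw [← hτval] at hxs
          rw [hxs, neg_mul, neg_mul, mul_neg, neg_neg, ← mul_assoc, hsq, one_mul]
      · rw [if_neg hp]
        by_cases hxt : Trans E₀ τ.val
        · have hM : Mk G k σ τ = 0 := by
            simp only [Mk]
            rw [if_neg (fun h => hτσ h.symm), if_neg]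
            rintro ⟨u, v, huv, hsd⟩
            obtain ⟨e, he, hmm, _⟩ :=
              neighbor_struct hsub hdisj hxt (σ.2.trans τ.2.symm) huv hsd
            exact hp ⟨hxt, e, he, hmm⟩
          rw [hM, zero_mul]
        · rw [show xv E₀ k τ = 0 from if_neg hxt, mul_zero]
    have hcount : ((Finset.univ.erase σ).filter fun τ =>
        Trans E₀ τ.val ∧ ∃ e ∈ E₀, σ.val ∆ τ.val = {emin e, emax e}).card = k := by
      refine Eq.trans ?_ hk
      symm
      have hcins : ∀ e ∈ E₀, (insert (other σ.val e) (σ.val.erase (chosen σ.val e))).card = k := by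
        intro e he
        have hc := chosen_mem hσ he
        have ho := other_notMem hσ he
        rw [Finset.card_insert_of_notMem (fun h => ho (Finset.mem_erase.1 h).2),
          Finset.card_erase_of_mem hc]
        have h1 : 0 < σ.val.card := Finset.card_pos.2 ⟨_, hc⟩
        have h2 : σ.val.card = k := σ.2
        omega
      apply Finset.card_bij (fun e he => (⟨insert (other σ.val e) (σ.val.erase (chosen σ.val e)),
        hcins e he⟩ : {s : Finset V // s.card = k}))
      · intro e he
        have hc := chosen_mem hσ he
        have ho := other_notMem hσ he
        rw [Finset.mem_filter, Finset.mem_erase]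
        refine ⟨⟨?_, Finset.mem_univ _⟩, ?_, e, he, ?_⟩
        · intro h
          apply ho
          have hval : insert (other σ.val e) (σ.val.erase (chosen σ.val e)) = σ.val :=
            congrArg Subtype.val h
          have hms := Finset.mem_insert_self (other σ.val e) (σ.val.erase (chosen σ.val e))
          rw [hval] at hms
          exact hms
        · exact (trans_swap hpd hσ he (chosen_mem_edge σ.val e) (other_mem_edge σ.val e)
            (chosen_ne_other (hnd e he)) hc).2
        · rw [symmDiff_swap hc ho, pair_chosen_other]
      · intro e1 h1 e2 h2 heq
        have hval := congrArg Subtype.val heq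
        simp only at hval
        have hsd1 := symmDiff_swap (chosen_mem hσ h1) (other_notMem hσ h1)
        have hsd2 := symmDiff_swap (chosen_mem hσ h2) (other_notMem hσ h2)
        rw [hval] at hsd1
        have hpair : ({emin e1, emax e1} : Finset V) = {emin e2, emax e2} := by
          rw [← pair_chosen_other (σ := σ.val) e1, ← pair_chosen_other (σ := σ.val) e2,
            ← hsd1, ← hsd2]
        have : emin e1 ∈ ({emin e2, emax e2} : Finset V) := by
          rw [← hpair]; simp
        rcases Finset.mem_insert.1 this with h | h
        · exact edge_eq_of_mem hpd h1 h2 (h ▸ emin_mem e1) (emin_mem e2)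
        · rw [Finset.mem_singleton] at h
          exact edge_eq_of_mem hpd h1 h2 (h ▸ emin_mem e1) (emax_mem e2)
      · intro τ hτ
        rw [Finset.mem_filter, Finset.mem_erase] at hτ
        obtain ⟨⟨hτσ, _⟩, hτT, e, he, hsd⟩ := hτ
        have hab : emin e < emax e := emin_lt_emax (hnd e he)
        refine ⟨e, he, ?_⟩
        apply Subtype.ext
        simp only
        rcases symmDiff_pair_cases (σ.2.trans τ.2.symm) hab.ne hsd
          with ⟨h1, h2, h3, h4⟩ | ⟨h1, h2, h3, h4⟩
        · have hτval : τ.val = insert (emax e) (σ.val.erase (emin e)) :=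
            eq_insert_erase_of_symmDiff hsd h1 h2 h3 h4
          have hch : chosen σ.val e = emin e := by
            unfold chosen; rw [if_neg h4]
          have hot : other σ.val e = emax e := by
            unfold other; rw [if_neg h4]
          rw [hch, hot, hτval]
        · have hsd' : σ.val ∆ τ.val = {emax e, emin e} := by rw [hsd, Finset.pair_comm]
          have hτval : τ.val = insert (emin e) (σ.val.erase (emax e)) :=
            eq_insert_erase_of_symmDiff hsd' h1 h2 h3 h4
          have hch : chosen σ.val e = emax e := by
            unfold chosen; rw [if_pos h1]
          have hot : other σ.val e = emin e := by
            unfold other; rw [if_pos h1]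
          rw [hch, hot, hτval]
    rw [← Finset.sum_erase_add _ _ (Finset.mem_univ σ)]
    rw [Finset.sum_congr rfl hterm, Finset.sum_ite, Finset.sum_const, Finset.sum_const_zero,
      add_zero, hcount, hdiag, hx, nsmul_eq_mul]
    push_cast
    ring

noncomputable def pick (σ : Finset V) (e : Sym2 V) : V :=
  if emin e ∈ σ then emin e else emax e

lemma pick_mem_edge (σ : Finset V) (e : Sym2 V) : pick σ e ∈ e := by
  unfold pick; split
  · exact emin_mem e
  · exact emax_mem e

include hdisj in
lemma card_meets_le (σ : Finset V) :
    (G.edgeFinset.filter fun e => ∃ v ∈ σ, v ∈ e).card ≤ σ.card := by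
  apply Finset.card_le_card_of_injOn (pick σ)
  · intro e heF
    obtain ⟨heG, v, hv, hve⟩ := Finset.mem_filter.1 heF
    unfold pick
    by_cases hmin : emin e ∈ σ
    · rw [if_pos hmin]; exact hmin
    · rw [if_neg hmin]
      rcases mem_iff_minmax.1 hve with h | h
      · exact absurd (h ▸ hv) hmin
      · exact h ▸ hv
  · intro e1 h1 e2 h2 hpp
    by_contra hne
    exact hdisj e1 (SimpleGraph.mem_edgeFinset.1 (Finset.mem_filter.1 h1).1)
      e2 (SimpleGraph.mem_edgeFinset.1 (Finset.mem_filter.1 h2).1) hne (pick σ e1)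
      ⟨pick_mem_edge σ e1, hpp ▸ pick_mem_edge σ e2⟩

lemma structure_of_neighbor {σ τ : Finset V} (hcard : σ.card = τ.card) {u v : V}
    (hne : u ≠ v) (hsd : σ ∆ τ = {u, v}) :
    ∃ p q, σ ∆ τ = {p, q} ∧ s(p, q) = s(u, v) ∧ σ \ τ = {p} ∧ p ∈ σ ∧ q ∉ σ := by
  rcases symmDiff_pair_cases hcard hne hsd with ⟨h1, h2, h3, h4⟩ | ⟨h1, h2, h3, h4⟩
  · refine ⟨u, v, hsd, rfl, ?_, h1, h4⟩
    ext x
    simp only [Finset.mem_sdiff, Finset.mem_singleton]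
    constructor
    · rintro ⟨hx1, hx2⟩
      have : x ∈ σ ∆ τ := Finset.mem_symmDiff.2 (Or.inl ⟨hx1, hx2⟩)
      rw [hsd] at this
      rcases Finset.mem_insert.1 this with h | h
      · exact h
      · rw [Finset.mem_singleton] at h
        exact absurd (h ▸ hx1) h4
    · rintro rfl
      exact ⟨h1, h2⟩
  · refine ⟨v, u, by rw [hsd, Finset.pair_comm], Sym2.eq_swap, ?_, h1, h4⟩
    ext x
    simp only [Finset.mem_sdiff, Finset.mem_singleton]
    constructor
    · rintro ⟨hx1, hx2⟩
      have : x ∈ σ ∆ τ := Finset.mem_symmDiff.2 (Or.inl ⟨hx1, hx2⟩)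
      rw [hsd] at this
      rcases Finset.mem_insert.1 this with h | h
      · exact absurd (h ▸ hx1) h4
      · rw [Finset.mem_singleton] at h
        exact h
    · rintro rfl
      exact ⟨h1, h2⟩

include hdisj in
lemma card_neighbors_le (σ : {s : Finset V // s.card = k}) (hne : σ.val.Nonempty) :
    ((Finset.univ.erase σ).filter fun τ : {s : Finset V // s.card = k} =>
      ∃ u v, G.Adj u v ∧ σ.val ∆ τ.val = {u, v}).card ≤ σ.val.card := by
  apply Finset.card_le_card_of_injOn (fun τ =>
    if h : (σ.val \ τ.val).Nonempty then (σ.val \ τ.val).min' h else σ.val.min' hne)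
  · intro τ hτ
    obtain ⟨u, v, huv, hsd⟩ := (Finset.mem_filter.1 hτ).2
    obtain ⟨p, q, hpq, hsym, hdiff, hpσ, hqσ⟩ :=
      structure_of_neighbor (σ.2.trans τ.2.symm) huv.ne hsd
    have hn : (σ.val \ τ.val).Nonempty := by rw [hdiff]; exact ⟨p, by simp⟩
    simp only [dif_pos hn]
    exact (Finset.mem_sdiff.1 (Finset.min'_mem _ hn)).1
  · intro τ1 hτ1 τ2 hτ2 heq
    obtain ⟨u1, v1, huv1, hsd1⟩ := (Finset.mem_filter.1 hτ1).2
    obtain ⟨u2, v2, huv2, hsd2⟩ := (Finset.mem_filter.1 hτ2).2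
    obtain ⟨p1, q1, hpq1, hsym1, hdiff1, hp1, hq1⟩ :=
      structure_of_neighbor (σ.2.trans τ1.2.symm) huv1.ne hsd1
    obtain ⟨p2, q2, hpq2, hsym2, hdiff2, hp2, hq2⟩ :=
      structure_of_neighbor (σ.2.trans τ2.2.symm) huv2.ne hsd2
    have hn1 : (σ.val \ τ1.val).Nonempty := by rw [hdiff1]; exact ⟨p1, by simp⟩
    have hn2 : (σ.val \ τ2.val).Nonempty := by rw [hdiff2]; exact ⟨p2, by simp⟩
    simp only [dif_pos hn1, dif_pos hn2] at heq
    set m1 := (σ.val \ τ1.val).min' hn1 with hm1def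
    set m2 := (σ.val \ τ2.val).min' hn2 with hm2def
    have hm1 : m1 = p1 := by
      have hmm : m1 ∈ σ.val \ τ1.val := Finset.min'_mem _ hn1
      rw [hdiff1, Finset.mem_singleton] at hmm
      exact hmm
    have hm2 : m2 = p2 := by
      have hmm : m2 ∈ σ.val \ τ2.val := Finset.min'_mem _ hn2
      rw [hdiff2, Finset.mem_singleton] at hmm
      exact hmm
    have hp12 : p1 = p2 := by rw [← hm1, ← hm2, heq]
    have he1 : s(p1, q1) ∈ G.edgeSet := by rw [hsym1]; exact G.mem_edgeSet.2 huv1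
    have he2 : s(p2, q2) ∈ G.edgeSet := by rw [hsym2]; exact G.mem_edgeSet.2 huv2
    have hee : s(p1, q1) = s(p2, q2) := by
      by_contra hcon
      exact hdisj _ he1 _ he2 hcon p1
        ⟨Sym2.mem_mk_left p1 q1, by rw [hp12]; exact Sym2.mem_mk_left p2 q2⟩
    have hq12 : q1 = q2 := by
      rw [hp12] at hee
      exact Sym2.congr_right.1 hee
    have hsdeq : σ.val ∆ τ1.val = σ.val ∆ τ2.val := by
      rw [hpq1, hpq2, hp12, hq12]
    apply Subtype.ext
    calc τ1.val = σ.val ∆ (σ.val ∆ τ1.val) := (symmDiff_symmDiff_cancel_left _ _).symm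
      _ = σ.val ∆ (σ.val ∆ τ2.val) := by rw [hsdeq]
      _ = τ2.val := symmDiff_symmDiff_cancel_left _ _

include hdisj in
lemma row_sum_le (hk1 : 1 ≤ k) (σ : {s : Finset V // s.card = k}) :
    ∑ τ, |Mk G k σ τ| ≤ 2 * (k : ℝ) := by
  have hne : σ.val.Nonempty := Finset.card_pos.1 (by rw [σ.2]; omega)
  rw [← Finset.sum_erase_add _ _ (Finset.mem_univ σ)]
  have hdg : |Mk G k σ σ| ≤ (k : ℝ) := by
    simp only [Mk]
    rw [if_pos trivial, abs_of_nonneg (by positivity)]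
    have := card_meets_le (G := G) hdisj σ.val
    rw [σ.2] at this
    exact_mod_cast this
  have hoff : ∑ τ ∈ Finset.univ.erase σ, |Mk G k σ τ| ≤ (k : ℝ) := by
    have hboole : ∀ τ ∈ Finset.univ.erase σ, |Mk G k σ τ| ≤
        (if ∃ u v, G.Adj u v ∧ σ.val ∆ τ.val = {u, v} then (1 : ℝ) else 0) := by
      intro τ hτ
      simp only [Mk]
      rw [if_neg (fun h => (Finset.mem_erase.1 hτ).1 h.symm)]
      by_cases hcond : ∃ u v, G.Adj u v ∧ σ.val ∆ τ.val = {u, v}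
      · rw [if_pos hcond, if_pos hcond, abs_neg, signPair, abs_pow, abs_neg, abs_one, one_pow]
      · rw [if_neg hcond, if_neg hcond, abs_zero]
    calc ∑ τ ∈ Finset.univ.erase σ, |Mk G k σ τ|
        ≤ ∑ τ ∈ Finset.univ.erase σ,
            (if ∃ u v, G.Adj u v ∧ σ.val ∆ τ.val = {u, v} then (1 : ℝ) else 0) :=
          Finset.sum_le_sum hboole
      _ = (((Finset.univ.erase σ).filter fun τ =>
            ∃ u v, G.Adj u v ∧ σ.val ∆ τ.val = {u, v}).card : ℝ) := by
          rw [Finset.sum_boole]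
      _ ≤ (k : ℝ) := by
          have := card_neighbors_le (G := G) hdisj σ hne
          rw [σ.2] at this
          exact_mod_cast this
  linarith

include hdisj in
lemma eig_le (hk1 : 1 ≤ k) {μ : ℝ} {x : {s : Finset V // s.card = k} → ℝ}
    (hx : x ≠ 0) (hMx : (Mk G k).mulVec x = μ • x) : μ ≤ 2 * (k : ℝ) := by
  rcases isEmpty_or_nonempty {s : Finset V // s.card = k} with hE | hE
  · exact absurd (funext fun τ => (hE.false τ).elim) hx
  obtain ⟨σm, _, hmax⟩ := Finset.exists_max_image Finset.univ (fun τ => |x τ|)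
    ⟨Classical.arbitrary _, Finset.mem_univ _⟩
  obtain ⟨τ0, hτ0⟩ : ∃ τ, x τ ≠ 0 := by
    by_contra h
    push_neg at h
    exact hx (funext h)
  have hpos : 0 < |x σm| := lt_of_lt_of_le (abs_pos.2 hτ0) (hmax τ0 (Finset.mem_univ _))
  have heq : ∑ τ, Mk G k σm τ * x τ = μ * x σm := by
    have := congrFun hMx σm
    rw [Pi.smul_apply, smul_eq_mul] at this
    rw [← this]
    rfl
  have hbound : |μ| * |x σm| ≤ 2 * (k : ℝ) * |x σm| := by
    calc |μ| * |x σm| = |μ * x σm| := (abs_mul _ _).symm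
      _ = |∑ τ, Mk G k σm τ * x τ| := by rw [heq]
      _ ≤ ∑ τ, |Mk G k σm τ * x τ| := Finset.abs_sum_le_sum_abs _ _
      _ ≤ ∑ τ, |Mk G k σm τ| * |x σm| := by
          apply Finset.sum_le_sum
          intro τ _
          rw [abs_mul]
          exact mul_le_mul_of_nonneg_left (hmax τ (Finset.mem_univ _)) (abs_nonneg _)
      _ = (∑ τ, |Mk G k σm τ|) * |x σm| := by rw [Finset.sum_mul]
      _ ≤ 2 * (k : ℝ) * |x σm| :=
          mul_le_mul_of_nonneg_right (row_sum_le hdisj hk1 σm) (abs_nonneg _)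
  have : |μ| ≤ 2 * (k : ℝ) := le_of_mul_le_mul_right hbound hpos
  exact (le_abs_self μ).trans this

end Mat
end Stmt14

theorem stmt_14 {V : Type*} [Fintype V] [LinearOrder V] (t k : ℕ) (hk1 : 1 ≤ k)
    (hkt : k ≤ t) (hV : 2 * t ≤ Fintype.card V) (G : SimpleGraph V)
    (hcard : G.edgeSet.ncard = t)
    (hdisj : ∀ e₁ ∈ G.edgeSet, ∀ e₂ ∈ G.edgeSet, e₁ ≠ e₂ → ∀ v : V, ¬(v ∈ e₁ ∧ v ∈ e₂)) :
    tEps G k = 2 * (k : ℝ) - t := by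
  classical
  have hcardF : k ≤ G.edgeFinset.card := by
    have h1 : G.edgeFinset.card = t := by
      rw [← hcard]
      simp [Set.ncard_eq_toFinset_card', SimpleGraph.edgeFinset]
    omega
  obtain ⟨E₀, hsub, hk⟩ := Finset.exists_subset_card_eq hcardF
  have hgreat : IsGreatest
      {μ : ℝ | ∃ x : {s : Finset V // s.card = k} → ℝ, x ≠ 0 ∧ (Mk G k).mulVec x = μ • x}
      (2 * (k : ℝ)) := by
    constructor
    · exact ⟨Stmt14.xv E₀ k, Stmt14.xv_ne hsub hdisj hk, Stmt14.mulVec_xv hsub hdisj hk⟩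
    · rintro μ ⟨x, hx, hMx⟩
      exact Stmt14.eig_le hdisj hk1 hx hMx
  unfold tEps maxEigenvalue
  rw [hgreat.csSup_eq]
  congr 1
  norm_cast
  rw [SimpleGraph.edgeFinset_card, ← Nat.card_eq_fintype_card, Nat.card_coe_set_eq, hcard]
end

section
/- Let t ≥ k ≥ 1, let V be a finite set with |V| ≥ 2t, and let G ∈ ℳ_t(V). Then λ_1(L(F_k(G))) = 2k; equivalently, λ_1(L(F_k(G))) − |E| = 2k − t. -/
open Finset
open scoped symmDiff

/-!
Every vertex `σ` of `F_k(G)` has degree equal to the number of edges of `G` leaving `σ`, which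
for a matching is at most `|σ| = k`; Gershgorin's theorem then bounds every Laplacian eigenvalue
by `2k`. Conversely, fix `k` edges of `G`, each with an orientation. The product of the
orientation signs, taken on the `k`-sets meeting every chosen edge in exactly one vertex and
extended by `0`, changes sign along every edge of `F_k(G)` and is supported on vertices of
degree `k`, hence is an eigenvector for the eigenvalue `2k`.
-/

namespace SimpleGraph

variable {W : Type*} [Fintype W] [DecidableEq W] (H : SimpleGraph W) [DecidableRel H.Adj]

theorem eigenvalue_lapMatrix_le {d : ℕ} (hd : ∀ v, H.degree v ≤ d) {μ : ℝ} {x : W → ℝ}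
    (hx : x ≠ 0) (h : (H.lapMatrix ℝ).mulVec x = μ • x) : μ ≤ 2 * d := by
  have hμ : Module.End.HasEigenvalue (Matrix.toLin' (H.lapMatrix ℝ)) μ :=
    Module.End.hasEigenvalue_of_hasEigenvector
      ⟨Module.End.mem_eigenspace_iff.mpr (by rwa [Matrix.toLin'_apply]), hx⟩
  obtain ⟨i, hi⟩ := eigenvalue_mem_ball hμ
  have hdiag : H.lapMatrix ℝ i i = H.degree i := by simp [lapMatrix, degMatrix]
  have hrad : ∑ j ∈ univ.erase i, ‖H.lapMatrix ℝ i j‖ = H.degree i := by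
    rw [degree_eq_sum_if_adj, ← sum_erase univ (f := fun j => if H.Adj i j then (1 : ℝ) else 0)
      (a := i) (by simp)]
    refine sum_congr rfl fun j hj => ?_
    by_cases hadj : H.Adj i j <;> simp [lapMatrix, degMatrix, (ne_of_mem_erase hj).symm, hadj]
  rw [Metric.mem_closedBall, Real.dist_eq, hdiag, hrad] at hi
  have hdi : (H.degree i : ℝ) ≤ d := by exact_mod_cast hd i
  linarith [le_abs_self (μ - H.degree i)]

theorem lapMatrix_mulVec_apply_of_forall_adj_neg {x : W → ℝ}
    (hx : ∀ v w, H.Adj v w → x w = -x v) (v : W) :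
    (H.lapMatrix ℝ).mulVec x v = 2 * H.degree v * x v := by
  rw [lapMatrix_mulVec_apply,
    sum_congr rfl fun w hw => hx v w ((H.mem_neighborFinset v w).mp hw),
    sum_const, card_neighborFinset_eq_degree, nsmul_eq_mul]
  ring

theorem maxEigenvalue_lapMatrix_eq {d : ℕ} (hd : ∀ v, H.degree v ≤ d) {x : W → ℝ} (hx0 : x ≠ 0)
    (hneg : ∀ v w, H.Adj v w → x w = -x v) (hx : ∀ v, x v ≠ 0 → H.degree v = d) :
    maxEigenvalue (H.lapMatrix ℝ) = 2 * d := by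
  have heig : (H.lapMatrix ℝ).mulVec x = (2 * d : ℝ) • x := by
    ext v
    rw [H.lapMatrix_mulVec_apply_of_forall_adj_neg hneg, Pi.smul_apply, smul_eq_mul]
    by_cases hv : x v = 0
    · simp [hv]
    · rw [hx v hv, mul_assoc]
  exact IsGreatest.csSup_eq ⟨⟨x, hx0, heig⟩,
    fun μ ⟨y, hy, h⟩ => H.eigenvalue_lapMatrix_le hd hy h⟩

end SimpleGraph

section TokenGraph

variable {V : Type*} [DecidableEq V]

theorem Finset.mem_xor_of_symmDiff_eq_pair {σ τ : Finset V} (hc : #σ = #τ) {a b : V}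
    (hab : a ≠ b) (h : σ ∆ τ = {a, b}) : Xor (a ∈ σ) (b ∈ σ) := by
  have hsd : #(σ \ τ) = #(τ \ σ) := card_sdiff_eq_card_sdiff_iff.mpr hc
  have hmem : ∀ x, x ∈ σ ∆ τ ↔ x = a ∨ x = b := by simp [h]
  simp only [mem_symmDiff] at hmem
  by_cases ha : a ∈ σ <;> by_cases hb : b ∈ σ
  · have h1 : τ \ σ = ∅ := by grind
    have h2 : {a, b} ⊆ σ \ τ := by grind
    have := card_le_card h2
    rw [hsd, h1, card_empty, card_pair hab] at this
    omega
  · exact Or.inl ⟨ha, hb⟩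
  · exact Or.inr ⟨hb, ha⟩
  · have h1 : σ \ τ = ∅ := by grind
    have h2 : {a, b} ⊆ τ \ σ := by grind
    have := card_le_card h2
    rw [← hsd, h1, card_empty, card_pair hab] at this
    omega

theorem Finset.card_symmDiff_pair {σ : Finset V} {c d : V} (hc : c ∈ σ) (hd : d ∉ σ) :
    #(σ ∆ {c, d}) = #σ := by
  have : σ ∆ {c, d} = insert d (σ.erase c) := by
    ext x; simp only [mem_symmDiff, mem_insert, mem_singleton, mem_erase]; grind
  rw [this, card_insert_of_notMem (by simp [hd]), card_erase_add_one hc]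

theorem tokenGraph_adj_iff {G : SimpleGraph V} {k : ℕ} {σ τ : {s : Finset V // #s = k}} :
    (tokenGraph G k).Adj σ τ ↔ ∃ c ∈ σ.1, ∃ d ∉ σ.1, G.Adj c d ∧ τ.1 = σ.1 ∆ {c, d} := by
  constructor
  · rintro ⟨a, b, hab, h⟩
    have hτ : τ.1 = σ.1 ∆ {a, b} := by rw [← h, symmDiff_symmDiff_cancel_left]
    rcases Finset.mem_xor_of_symmDiff_eq_pair (σ.2.trans τ.2.symm) hab.ne h with
      ⟨ha, hb⟩ | ⟨hb, ha⟩
    · exact ⟨a, ha, b, hb, hab, hτ⟩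
    · exact ⟨b, hb, a, ha, hab.symm, by rw [hτ, pair_comm]⟩
  · rintro ⟨c, -, d, -, hcd, hτ⟩
    exact ⟨c, d, hcd, by rw [hτ, symmDiff_symmDiff_cancel_left]⟩

theorem degree_tokenGraph [Fintype V] (G : SimpleGraph V) [DecidableRel G.Adj] {k : ℕ}
    (σ : {s : Finset V // #s = k}) :
    (tokenGraph G k).degree σ = #{p ∈ σ.1 ×ˢ σ.1ᶜ | G.Adj p.1 p.2} := by
  symm
  refine card_bij (fun p hp => ⟨σ.1 ∆ {p.1, p.2}, ?_⟩) ?_ ?_ ?_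
  · simp only [mem_filter, mem_product, mem_compl] at hp
    rw [Finset.card_symmDiff_pair hp.1.1 hp.1.2, σ.2]
  · intro p hp
    simp only [mem_filter, mem_product, mem_compl] at hp
    rw [SimpleGraph.mem_neighborFinset, tokenGraph_adj_iff]
    exact ⟨p.1, hp.1.1, p.2, hp.1.2, hp.2, rfl⟩
  · intro p hp q hq hpq
    simp only [mem_filter, mem_product, mem_compl] at hp hq
    have hpair := symmDiff_right_injective σ.1 (congrArg Subtype.val hpq)
    have h1 : p.1 ∈ ({q.1, q.2} : Finset V) := hpair ▸ mem_insert_self _ _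
    have h2 : p.2 ∈ ({q.1, q.2} : Finset V) := hpair ▸ mem_insert_of_mem (mem_singleton_self _)
    simp only [mem_insert, mem_singleton] at h1 h2
    exact Prod.ext (h1.resolve_right (by grind)) (h2.resolve_left (by grind))
  · intro τ hτ
    obtain ⟨c, hc, d, hd, hcd, hτ⟩ := tokenGraph_adj_iff.mp
      ((SimpleGraph.mem_neighborFinset ..).mp hτ)
    exact ⟨(c, d), by simp [hc, hd, hcd], Subtype.ext hτ.symm⟩

end TokenGraph

theorem Sym2.out_mk {α : Type*} (a b : α) : s(a, b).out = (a, b) ∨ s(a, b).out = (b, a) := by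
  have h : s(s(a, b).out.1, s(a, b).out.2) = s(a, b) := s(a, b).out_eq
  rcases Sym2.eq_iff.mp h with ⟨h1, h2⟩ | ⟨h1, h2⟩
  · exact Or.inl (Prod.ext h1 h2)
  · exact Or.inr (Prod.ext h1 h2)

section Matching

variable {V : Type*} {G : SimpleGraph V}

-- The graphs of `ℳ_t(V)`, for some `t`.
def SimpleGraph.IsMatchingGraph (G : SimpleGraph V) : Prop :=
  ∀ ⦃u v w : V⦄, G.Adj u v → G.Adj u w → v = w

theorem SimpleGraph.IsMatchingGraph.eq_of_mem_of_mem_edgeSet (hG : G.IsMatchingGraph)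
    {e e' : Sym2 V} (he : e ∈ G.edgeSet) (he' : e' ∈ G.edgeSet) {x : V} (hx : x ∈ e)
    (hx' : x ∈ e') : e = e' := by
  obtain ⟨y, rfl⟩ := Sym2.mem_iff_exists.mp hx
  obtain ⟨y', rfl⟩ := Sym2.mem_iff_exists.mp hx'
  rw [hG (G.mem_edgeSet.mp he) (G.mem_edgeSet.mp he')]

theorem SimpleGraph.IsMatchingGraph.injOn_out_fst (hG : G.IsMatchingGraph) {S : Finset (Sym2 V)}
    (hS : ↑S ⊆ G.edgeSet) : Set.InjOn (fun e : Sym2 V => e.out.1) S :=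
  fun e he e' he' h => hG.eq_of_mem_of_mem_edgeSet (hS he) (hS he')
    e.out_fst_mem (by rw [show e.out.1 = e'.out.1 from h]; exact e'.out_fst_mem)

variable [DecidableEq V]

theorem SimpleGraph.IsMatchingGraph.card_filter_adj_product_compl [Fintype V]
    [DecidableRel G.Adj] (hG : G.IsMatchingGraph) (σ : Finset V) :
    #{p ∈ σ ×ˢ σᶜ | G.Adj p.1 p.2} = #{c ∈ σ | ∃ d ∉ σ, G.Adj c d} := by
  refine card_bij (fun p _ => p.1) ?_ ?_ ?_
  · intro p hp
    simp only [mem_filter, mem_product, mem_compl] at hp ⊢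
    exact ⟨hp.1.1, p.2, hp.1.2, hp.2⟩
  · intro p hp q hq h
    simp only [mem_filter] at hp hq
    exact Prod.ext h (hG hp.2 (h ▸ hq.2))
  · intro c hc
    simp only [mem_filter] at hc
    obtain ⟨hc, d, hd, hcd⟩ := hc
    exact ⟨(c, d), by simp [hc, hd, hcd], rfl⟩

variable [Fintype V] [DecidableRel G.Adj] {k : ℕ}

theorem SimpleGraph.IsMatchingGraph.degree_tokenGraph_le (hG : G.IsMatchingGraph)
    (σ : {s : Finset V // #s = k}) : (tokenGraph G k).degree σ ≤ k := by
  rw [degree_tokenGraph, hG.card_filter_adj_product_compl]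
  exact (card_filter_le _ _).trans σ.2.le

theorem SimpleGraph.IsMatchingGraph.degree_tokenGraph_eq (hG : G.IsMatchingGraph)
    {σ : {s : Finset V // #s = k}} (h : ∀ c ∈ σ.1, ∃ d ∉ σ.1, G.Adj c d) :
    (tokenGraph G k).degree σ = k := by
  rw [degree_tokenGraph, hG.card_filter_adj_product_compl, filter_true_of_mem h, σ.2]

end Matching

section TransversalSign

variable {V : Type*} [DecidableEq V]

noncomputable def edgeSign (σ : Finset V) (e : Sym2 V) : ℝ :=
  (if e.out.1 ∈ σ then 1 else 0) - (if e.out.2 ∈ σ then 1 else 0)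

theorem edgeSign_congr {σ τ : Finset V} {e : Sym2 V} (h : ∀ x ∈ e, x ∈ σ ↔ x ∈ τ) :
    edgeSign σ e = edgeSign τ e := by
  simp only [edgeSign, h _ e.out_fst_mem, h _ e.out_snd_mem]

theorem edgeSign_symmDiff_pair {σ : Finset V} {c d : V} (hc : c ∈ σ) (hd : d ∉ σ) :
    edgeSign (σ ∆ {c, d}) s(c, d) = -edgeSign σ s(c, d) := by
  have hcd : c ≠ d := ne_of_mem_of_not_mem hc hd
  rcases Sym2.out_mk c d with h | h <;> simp [edgeSign, h, hc, hd, hcd, hcd.symm, mem_symmDiff]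

theorem notMem_of_edgeSign_ne_zero {σ : Finset V} {c d : V} (h : edgeSign σ s(c, d) ≠ 0)
    (hc : c ∈ σ) : d ∉ σ := by
  rcases Sym2.out_mk c d with h' | h' <;> by_contra hd <;> simp [edgeSign, h', hc, hd] at h

noncomputable def transversalSign (S : Finset (Sym2 V)) (σ : Finset V) : ℝ :=
  if ∀ c ∈ σ, ∃ e ∈ S, c ∈ e then ∏ e ∈ S, edgeSign σ e else 0

variable {G : SimpleGraph V} {S : Finset (Sym2 V)}

theorem transversalSign_symmDiff_pair (hG : G.IsMatchingGraph) (hS : ↑S ⊆ G.edgeSet)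
    {σ : Finset V} {c d : V} (hc : c ∈ σ) (hd : d ∉ σ) (hcd : G.Adj c d) :
    transversalSign S (σ ∆ {c, d}) = -transversalSign S σ := by
  have hedge : s(c, d) ∈ G.edgeSet := hcd
  have hmem : ∀ x, x ≠ c → x ≠ d → (x ∈ σ ∆ {c, d} ↔ x ∈ σ) := by
    intro x hxc hxd
    simp [mem_symmDiff, hxc, hxd]
  by_cases he : s(c, d) ∈ S
  · have hcover : (∀ x ∈ σ ∆ {c, d}, ∃ e ∈ S, x ∈ e) ↔ ∀ x ∈ σ, ∃ e ∈ S, x ∈ e := by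
      refine forall_congr' fun x => ?_
      by_cases hx : x = c ∨ x = d
      · have : ∃ e ∈ S, x ∈ e := ⟨_, he, by rcases hx with rfl | rfl <;> simp⟩
        simp only [this, imp_true_iff]
      · obtain ⟨hxc, hxd⟩ := not_or.mp hx
        rw [hmem x hxc hxd]
    have hrest : ∀ e ∈ S.erase s(c, d), edgeSign (σ ∆ {c, d}) e = edgeSign σ e := by
      intro e he'
      have hne := ne_of_mem_erase he'
      have heG := hS (mem_of_mem_erase he')
      refine edgeSign_congr fun x hx => hmem x ?_ ?_
      · rintro rfl
        exact hne (hG.eq_of_mem_of_mem_edgeSet heG hedge hx (Sym2.mem_mk_left _ _))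
      · rintro rfl
        exact hne (hG.eq_of_mem_of_mem_edgeSet heG hedge hx (Sym2.mem_mk_right _ _))
    simp only [transversalSign, hcover, ← mul_prod_erase S _ he, edgeSign_symmDiff_pair hc hd,
      prod_congr rfl hrest]
    split_ifs <;> ring
  · have hunc : ∀ x ∈ s(c, d), ¬∃ e ∈ S, x ∈ e := fun x hx ⟨e, heS, hxe⟩ =>
      he (hG.eq_of_mem_of_mem_edgeSet (hS heS) hedge hxe hx ▸ heS)
    have hσ : ¬∀ x ∈ σ, ∃ e ∈ S, x ∈ e := fun h => hunc c (Sym2.mem_mk_left c d) (h c hc)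
    have hτ : ¬∀ x ∈ σ ∆ {c, d}, ∃ e ∈ S, x ∈ e := fun h =>
      hunc d (Sym2.mem_mk_right c d) (h d (by simp [mem_symmDiff, hd]))
    simp only [transversalSign, hσ, hτ, if_false, neg_zero]

theorem exists_adj_notMem_of_transversalSign_ne_zero (hS : ↑S ⊆ G.edgeSet)
    {σ : Finset V} (h : transversalSign S σ ≠ 0) : ∀ c ∈ σ, ∃ d ∉ σ, G.Adj c d := by
  unfold transversalSign at h
  split_ifs at h with hcover
  · intro c hc
    obtain ⟨e, he, hce⟩ := hcover c hc
    obtain ⟨d, rfl⟩ := Sym2.mem_iff_exists.mp hce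
    exact ⟨d, notMem_of_edgeSign_ne_zero (prod_ne_zero_iff.mp h _ he) hc, hS he⟩
  · exact absurd rfl h

theorem transversalSign_image_out_fst (hG : G.IsMatchingGraph) (hS : ↑S ⊆ G.edgeSet) :
    transversalSign S (S.image fun e => e.out.1) = 1 := by
  have hcover : ∀ c ∈ S.image fun e => e.out.1, ∃ e ∈ S, c ∈ e := by
    simp only [mem_image]
    rintro c ⟨e, he, rfl⟩
    exact ⟨e, he, e.out_fst_mem⟩
  rw [transversalSign, if_pos hcover]
  refine prod_eq_one fun e he => ?_
  have hsnd : e.out.2 ∉ S.image fun e => e.out.1 := by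
    simp only [mem_image, not_exists, not_and]
    intro e' he' h
    obtain rfl : e' = e :=
      hG.eq_of_mem_of_mem_edgeSet (hS he') (hS he) e'.out_fst_mem (h ▸ e.out_snd_mem)
    exact G.not_isDiag_of_mem_edgeSet (hS he') (e'.out_eq ▸ Sym2.mk_isDiag_iff.mpr h)
  simp [edgeSign, mem_image_of_mem _ he, hsnd]

end TransversalSign

theorem stmt_17_general {V : Type*} [Fintype V] [DecidableEq V] (t k : ℕ)
    (hkt : k ≤ t)
    (G : SimpleGraph V) [DecidableRel G.Adj]
    (hcard : G.edgeFinset.card = t)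
    (hdisj : ∀ e₁ ∈ G.edgeFinset, ∀ e₂ ∈ G.edgeFinset, e₁ ≠ e₂ →
      ∀ v : V, ¬(v ∈ e₁ ∧ v ∈ e₂)) :
    maxEigenvalue ((tokenGraph G k).lapMatrix ℝ) = 2 * (k : ℝ) := by
  have hG : G.IsMatchingGraph := fun u v w huv huw => by
    by_contra hvw
    exact hdisj s(u, v) (G.mem_edgeFinset.mpr huv) s(u, w) (G.mem_edgeFinset.mpr huw)
      (fun h => hvw (Sym2.congr_right.mp h)) u ⟨Sym2.mem_mk_left u v, Sym2.mem_mk_left u w⟩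
  obtain ⟨S, hSG, hSk⟩ := exists_subset_card_eq (hkt.trans hcard.ge)
  have hS : ↑S ⊆ G.edgeSet := fun e he => G.mem_edgeFinset.mp (hSG he)
  let σ₀ : {s : Finset V // #s = k} :=
    ⟨S.image fun e => e.out.1, by rw [card_image_of_injOn (hG.injOn_out_fst hS), hSk]⟩
  refine (tokenGraph G k).maxEigenvalue_lapMatrix_eq hG.degree_tokenGraph_le
    (x := fun σ => transversalSign S σ.1) (fun h => ?_) ?_ ?_
  · simpa [σ₀, transversalSign_image_out_fst hG hS] using congrFun h σ₀
  · intro σ τ hστ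
    obtain ⟨c, hc, d, hd, hcd, hτ⟩ := tokenGraph_adj_iff.mp hστ
    simp only [hτ, transversalSign_symmDiff_pair hG hS hc hd hcd]
  · exact fun σ hσ =>
      hG.degree_tokenGraph_eq (exists_adj_notMem_of_transversalSign_ne_zero hS hσ)

theorem stmt_17 {V : Type*} [Fintype V] [DecidableEq V] (t k : ℕ) (hk1 : 1 ≤ k)
    (hkt : k ≤ t) (hV : 2 * t ≤ Fintype.card V)
    (G : SimpleGraph V) [DecidableRel G.Adj]
    (hcard : G.edgeFinset.card = t)
    (hdisj : ∀ e₁ ∈ G.edgeFinset, ∀ e₂ ∈ G.edgeFinset, e₁ ≠ e₂ →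
      ∀ v : V, ¬(v ∈ e₁ ∧ v ∈ e₂)) :
    maxEigenvalue ((tokenGraph G k).lapMatrix ℝ) = 2 * (k : ℝ) :=
  stmt_17_general t k hkt G hcard hdisj
end

section
/- Let G=(V,E) be a finite simple graph and let 1 ≤ k ≤ |V|. Then λ_1(L(F_k(G))) ≤ |E| + τ(G), where τ(G) is the covering number of G. -/
open Finset
open scoped symmDiff

/-- The covering number `τ(G)`: the minimum size of a set of vertices meeting
every edge of `G`. -/
noncomputable def coverNumber {V : Type*} [Fintype V] [DecidableEq V] (G : SimpleGraph V)
    [DecidableRel G.Adj] : ℕ :=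
  sInf {t : ℕ | ∃ U : Finset V, U.card = t ∧ ∀ e ∈ G.edgeFinset, ∃ v ∈ U, v ∈ e}

/-
Write the quadratic form of `L(F_k(G))` as a sum of `(x(A ∪ {u}) - x(A ∪ {v}))²` over the moves
of a token along edges `uv` of `G`, and orient every edge of `G` towards a vertex of a minimum
cover `U`. The edges oriented towards a fixed `u`, with other endpoints forming a set `N` of size
`d`, contribute at most `(d + 1) ‖x‖²`: for a move with `|N ∩ A| = m`, weighted Cauchy–Schwarz gives
`(a - b)² ≤ (d + 1) (a² / (d - m) + b² / (m + 1))`, and then every set containing `u`, as well as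
every set avoiding `u`, collects total weight at most `d + 1`. Summing over `u ∈ U` bounds the
quadratic form by `(|E| + |U|) ‖x‖²`.
-/

open Matrix

theorem maxEigenvalue_le_of_forall_dotProduct_le {n : Type*} [Fintype n] {M : Matrix n n ℝ}
    {c : ℝ} (hc : 0 ≤ c) (h : ∀ x : n → ℝ, x ⬝ᵥ M *ᵥ x ≤ c * (x ⬝ᵥ x)) :
    maxEigenvalue M ≤ c := by
  refine Real.sSup_le ?_ hc
  rintro μ ⟨x, hx, hμx⟩
  have hpos : 0 < x ⬝ᵥ x := by simpa using Matrix.dotProduct_self_star_pos_iff.mpr hx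
  have hx := h x
  rw [hμx, dotProduct_smul, smul_eq_mul] at hx
  exact le_of_mul_le_mul_right hx hpos

theorem Function.Injective.sum_comp_extend_zero {α β M N : Type*} [Fintype α] [Fintype β]
    [AddCommMonoid M] [AddCommMonoid N] {f : α → β} (hf : f.Injective) (g : α → M) {h : M → N}
    (h0 : h 0 = 0) : ∑ b, h (Function.extend f g 0 b) = ∑ a, h (g a) := by
  classical
  rw [← sum_subset (subset_univ (univ.image f)), sum_image hf.injOn]
  · simp only [hf.extend_apply]
  · intro b _ hb
    rw [Function.extend_apply' _ _ _ fun ⟨a, ha⟩ => hb (ha ▸ mem_image_of_mem f (mem_univ a)),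
      Pi.zero_apply, h0]

theorem sub_sq_le_mul_div_add_div (a b : ℝ) {p q : ℝ} (hp : 0 < p) (hq : 0 < q) :
    (a - b) ^ 2 ≤ (p + q) * (a ^ 2 / p + b ^ 2 / q) := by
  rw [div_add_div _ _ hp.ne' hq.ne', mul_div_assoc', le_div_iff₀ (by positivity)]
  nlinarith [sq_nonneg (q * a + p * b)]

theorem natCast_mul_div_le (n : ℕ) {c : ℝ} (hc : 0 ≤ c) : n * (c / n) ≤ c := by
  rcases n.eq_zero_or_pos with rfl | hn
  · simpa using hc
  · rw [mul_div_cancel₀ _ (by positivity)]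

theorem sum_sdiff_sq_sub_le {V : Type*} [DecidableEq V] (a : ℝ) (b : V → ℝ) (N A : Finset V) :
    ∑ v ∈ N \ A, (a - b v) ^ 2
      ≤ (#N + 1) * (a ^ 2 + ∑ v ∈ N \ A, b v ^ 2 / (#(N ∩ A) + 1)) := by
  have hcard : (#(N \ A) : ℝ) + (#(N ∩ A) + 1) = #N + 1 := by
    rw [← card_sdiff_add_card_inter N A]; push_cast; ring
  calc ∑ v ∈ N \ A, (a - b v) ^ 2
      ≤ ∑ v ∈ N \ A, (#N + 1) * (a ^ 2 / #(N \ A) + b v ^ 2 / (#(N ∩ A) + 1)) := by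
        refine sum_le_sum fun v hv => ?_
        rw [← hcard]
        exact sub_sq_le_mul_div_add_div _ _ (by exact_mod_cast card_pos.mpr ⟨v, hv⟩)
          (by positivity)
    _ = (#N + 1) *
          (#(N \ A) * (a ^ 2 / #(N \ A)) + ∑ v ∈ N \ A, b v ^ 2 / (#(N ∩ A) + 1)) := by
        rw [← mul_sum, sum_add_distrib, sum_const, nsmul_eq_mul]
    _ ≤ (#N + 1) * (a ^ 2 + ∑ v ∈ N \ A, b v ^ 2 / (#(N ∩ A) + 1)) := by
        gcongr
        exact natCast_mul_div_le _ (sq_nonneg a)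

section BooleanLattice

variable {V : Type*} [Fintype V] [DecidableEq V]

theorem sum_filter_notMem_comp_insert (u : V) (f : Finset V → ℝ) :
    ∑ A with u ∉ A, f (insert u A) = ∑ s with u ∈ s, f s := by
  refine sum_nbij' (insert u) (fun s => s.erase u) ?_ ?_ ?_ ?_ fun _ _ => rfl <;>
    intro s hs <;> grind [erase_insert, insert_erase]

theorem sum_sum_sdiff_comp_insert {u : V} {N : Finset V} (hu : u ∉ N)
    (F : Finset V → V → ℝ) :
    ∑ A with u ∉ A, ∑ v ∈ N \ A, F (insert v A) v = ∑ s with u ∉ s, ∑ v ∈ N ∩ s, F s v := by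
  rw [sum_sigma', sum_sigma']
  refine sum_nbij' (fun p => ⟨insert p.2 p.1, p.2⟩) (fun p => ⟨p.1.erase p.2, p.2⟩)
    ?_ ?_ ?_ ?_ fun _ _ => rfl <;> rintro ⟨s, v⟩ hs <;>
    grind [erase_insert, insert_erase]

-- `(insert u A, insert v A)` runs over the pairs of sets exchanged by the transposition `(u v)`,
-- i.e. over the edges along `uv` of all token graphs `F_k(G)` at once.
def swapEnergy (y : Finset V → ℝ) (u v : V) : ℝ :=
  ∑ A with u ∉ A ∧ v ∉ A, (y (insert u A) - y (insert v A)) ^ 2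

theorem swapEnergy_comm (y : Finset V → ℝ) (u v : V) :
    swapEnergy y u v = swapEnergy y v u :=
  sum_congr (filter_congr fun _ _ => and_comm) fun _ _ => sub_sq_comm _ _

theorem sum_swapEnergy_le (y : Finset V → ℝ) {u : V} {N : Finset V} (hu : u ∉ N) :
    ∑ v ∈ N, swapEnergy y u v ≤ (#N + 1) * ∑ s, y s ^ 2 := by
  have hcard : ∀ A, ∀ v ∈ N \ A, (#(N ∩ A) : ℝ) + 1 = #(N ∩ insert v A) := by
    intro A v hv
    rw [inter_insert_of_mem (mem_sdiff.mp hv).1,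
      card_insert_of_notMem fun h => (mem_sdiff.mp hv).2 (mem_inter.mp h).2]
    push_cast; rfl
  calc ∑ v ∈ N, swapEnergy y u v
      = ∑ A with u ∉ A, ∑ v ∈ N \ A, (y (insert u A) - y (insert v A)) ^ 2 := by
        unfold swapEnergy
        exact sum_comm' fun v A => by simp only [mem_filter, mem_univ, true_and, mem_sdiff]; tauto
    _ ≤ ∑ A with u ∉ A, (#N + 1) *
          (y (insert u A) ^ 2 + ∑ v ∈ N \ A, y (insert v A) ^ 2 / (#(N ∩ A) + 1)) :=
        sum_le_sum fun A _ => sum_sdiff_sq_sub_le _ _ N A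
    _ = (#N + 1) *
          (∑ s with u ∈ s, y s ^ 2 + ∑ s with u ∉ s, ∑ v ∈ N ∩ s, y s ^ 2 / #(N ∩ s)) := by
        rw [← mul_sum, sum_add_distrib, sum_filter_notMem_comp_insert u (fun s => y s ^ 2),
          ← sum_sum_sdiff_comp_insert hu (fun s _ => y s ^ 2 / #(N ∩ s))]
        congr 2
        exact sum_congr rfl fun A _ => sum_congr rfl fun v hv => by rw [hcard A v hv]
    _ ≤ (#N + 1) * (∑ s with u ∈ s, y s ^ 2 + ∑ s with u ∉ s, y s ^ 2) := by
        gcongr with s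
        rw [sum_const, nsmul_eq_mul]
        exact natCast_mul_div_le _ (sq_nonneg _)
    _ = (#N + 1) * ∑ s, y s ^ 2 := by rw [sum_filter_add_sum_filter_not]

end BooleanLattice

section Orientation

variable {V : Type*} [Fintype V] [DecidableEq V] (G : SimpleGraph V) [DecidableRel G.Adj]

theorem sum_adj_eq_two_nsmul {M : Type*} [AddCommMonoid M] (head : Sym2 V → V)
    (hhead : ∀ e, head e ∈ e) (F : V → V → M) (hF : ∀ u v, F u v = F v u) :
    ∑ u, ∑ v, (if G.Adj u v then F u v else 0)
      = 2 • ∑ u, ∑ v with G.Adj u v ∧ head s(u, v) = u, F u v := by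
  have hsplit : ∀ u v, (if G.Adj u v then F u v else 0)
      = (if G.Adj u v ∧ head s(u, v) = u then F u v else 0)
        + (if G.Adj v u ∧ head s(v, u) = v then F v u else 0) := by
    intro u v
    by_cases h : G.Adj u v
    · have hne := G.ne_of_adj h
      rcases Sym2.mem_iff.mp (hhead s(u, v)) with h' | h' <;>
        simp [h, h.symm, h', Sym2.eq_swap, hne, hne.symm, hF v u]
    · simp [h, G.adj_comm v u]
  simp_rw [sum_filter, hsplit, sum_add_distrib]
  rw [sum_comm (f := fun u v => if G.Adj v u ∧ head s(v, u) = v then F v u else 0), two_nsmul]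

theorem sum_adj_le_of_cover {U : Finset V} (hU : ∀ e ∈ G.edgeFinset, ∃ v ∈ U, v ∈ e)
    (F : V → V → ℝ) (hF : ∀ u v, F u v = F v u) {B : ℝ}
    (hstar : ∀ u (N : Finset V), u ∉ N → ∑ v ∈ N, F u v ≤ (#N + 1) * B) :
    ∑ u, ∑ v, (if G.Adj u v then F u v else 0) ≤ 2 * ((#G.edgeFinset + #U) * B) := by
  let head : Sym2 V → V := fun e => if h : ∃ w ∈ U, w ∈ e then h.choose else e.out.1
  have hhead : ∀ e, head e ∈ e := fun e => by
    unfold head; split_ifs with h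
    exacts [h.choose_spec.2, Sym2.out_fst_mem e]
  have hheadU : ∀ e ∈ G.edgeFinset, head e ∈ U := fun e he => by
    simp only [head, dif_pos (hU e he), (hU e he).choose_spec.1]
  let N : V → Finset V := fun u => {v | G.Adj u v ∧ head s(u, v) = u}
  have hNU : ∀ u ∉ U, N u = ∅ := fun u hu => filter_eq_empty_iff.mpr fun v _ ⟨hadj, hv⟩ =>
    hu (hv ▸ hheadU _ (G.mem_edgeFinset.mpr hadj))
  have hcard : ∑ u ∈ U, #(N u) = #G.edgeFinset := by
    rw [sum_subset (subset_univ U) fun u _ hu => by rw [hNU u hu, card_empty]]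
    have := sum_adj_eq_two_nsmul G head hhead (fun _ _ => 1) fun _ _ => rfl
    simp only [← card_filter, ← G.neighborFinset_eq_filter, G.card_neighborFinset_eq_degree,
      G.sum_degrees_eq_twice_card_edges, sum_const, smul_eq_mul, mul_one] at this
    exact (Nat.eq_of_mul_eq_mul_left two_pos this).symm
  calc ∑ u, ∑ v, (if G.Adj u v then F u v else 0)
      = 2 * ∑ u ∈ U, ∑ v ∈ N u, F u v := by
        rw [sum_adj_eq_two_nsmul G head hhead F hF, two_nsmul, ← two_mul,
          sum_subset (subset_univ U) fun u _ hu => by rw [hNU u hu, sum_empty]]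
    _ ≤ 2 * ∑ u ∈ U, (#(N u) + 1) * B := by
        gcongr with u
        exact hstar u (N u) (by simp [N])
    _ = 2 * ((#G.edgeFinset + #U) * B) := by
        rw [← sum_mul, sum_add_distrib, ← hcard]
        push_cast
        simp

end Orientation

theorem exists_eq_insert_of_symmDiff_eq_pair {V : Type*} [DecidableEq V] {s t : Finset V}
    {u v : V} (hst : #s = #t) (huv : u ≠ v) (h : s ∆ t = {u, v}) :
    ∃ a b A, s(a, b) = s(u, v) ∧ a ∉ A ∧ b ∉ A ∧ s = insert a A ∧ t = insert b A := by
  have hsum : #(s \ t) + #(t \ s) = 2 := by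
    rw [← card_union_of_disjoint disjoint_sdiff_sdiff, ← sup_eq_union, ← symmDiff_def, h,
      card_pair huv]
  have hcomm := card_sdiff_comm hst
  obtain ⟨a, ha⟩ := card_eq_one.mp (by omega : #(s \ t) = 1)
  obtain ⟨b, hb⟩ := card_eq_one.mp (by omega : #(t \ s) = 1)
  have has : a ∈ s \ t := by rw [ha]; exact mem_singleton_self a
  have hbt : b ∈ t \ s := by rw [hb]; exact mem_singleton_self b
  refine ⟨a, b, s ∩ t, ?_, fun ha' => (mem_sdiff.mp has).2 (mem_inter.mp ha').2,
    fun hb' => (mem_sdiff.mp hbt).2 (mem_inter.mp hb').1, ?_, ?_⟩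
  · have hau : a ∈ ({u, v} : Finset V) := h ▸ mem_symmDiff.mpr (Or.inl (mem_sdiff.mp has))
    have hbu : b ∈ ({u, v} : Finset V) := h ▸ mem_symmDiff.mpr (Or.inr (mem_sdiff.mp hbt))
    have hab : a ≠ b := fun hab => (mem_sdiff.mp hbt).2 (hab ▸ (mem_sdiff.mp has).1)
    simp only [mem_insert, mem_singleton] at hau hbu
    grind [Sym2.eq_iff]
  · rw [insert_eq, ← ha, sdiff_union_inter]
  · rw [insert_eq, ← hb, inter_comm, sdiff_union_inter]

theorem sum_tokenGraph_adj_le {V : Type*} [Fintype V] [DecidableEq V] (G : SimpleGraph V)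
    [DecidableRel G.Adj] (k : ℕ) (x : {s : Finset V // #s = k} → ℝ) :
    ∑ σ, ∑ τ, (if (tokenGraph G k).Adj σ τ then (x σ - x τ) ^ 2 else 0)
      ≤ ∑ u, ∑ v,
          if G.Adj u v then swapEnergy (Function.extend Subtype.val x 0) u v else 0 := by
  set y := Function.extend Subtype.val x 0
  have hy : ∀ σ, y σ.val = x σ := Subtype.val_injective.extend_apply x 0
  let energy : Finset V × Finset V → ℝ := fun q => (y q.1 - y q.2) ^ 2
  let moves : Finset (V × V × Finset V) := {t | G.Adj t.1 t.2.1 ∧ t.1 ∉ t.2.2 ∧ t.2.1 ∉ t.2.2}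
  let move : V × V × Finset V → Finset V × Finset V :=
    fun t => (insert t.1 t.2.2, insert t.2.1 t.2.2)
  let adjPairs := ({p | (tokenGraph G k).Adj p.1 p.2} : Finset (_ × _)).map
    ((Function.Embedding.subtype _).prodMap (Function.Embedding.subtype _))
  calc ∑ σ, ∑ τ, (if (tokenGraph G k).Adj σ τ then (x σ - x τ) ^ 2 else 0)
      = ∑ q ∈ adjPairs, energy q := by
        rw [sum_map, sum_filter, ← Fintype.sum_prod_type']
        simp [energy, hy]
    _ ≤ ∑ q ∈ moves.image move, energy q := by
        refine sum_le_sum_of_subset_of_nonneg ?_ fun _ _ _ => sq_nonneg _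
        intro q hq
        obtain ⟨⟨σ, τ⟩, hστ, rfl⟩ := mem_map.mp hq
        obtain ⟨u, v, huv, hd⟩ := (mem_filter.mp hστ).2
        obtain ⟨a, b, A, hab, ha, hb, hσ, hτ⟩ :=
          exists_eq_insert_of_symmDiff_eq_pair (σ.2.trans τ.2.symm) (G.ne_of_adj huv) hd
        have hadj : G.Adj a b := G.mem_edgeSet.mp (hab ▸ G.mem_edgeSet.mpr huv)
        exact mem_image.mpr ⟨(a, b, A), mem_filter.mpr ⟨mem_univ _, hadj, ha, hb⟩,
          by simp [move, hσ, hτ]⟩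
    _ ≤ ∑ t ∈ moves, energy (move t) := sum_image_le_of_nonneg fun _ _ => sq_nonneg _
    _ = ∑ u, ∑ v, if G.Adj u v then swapEnergy y u v else 0 := by
        simp only [moves, swapEnergy, sum_filter, Fintype.sum_prod_type, ite_and, sum_ite_irrel,
          sum_const_zero]
        rfl

theorem exists_cover_card_eq_coverNumber {V : Type*} [Fintype V] [DecidableEq V]
    (G : SimpleGraph V) [DecidableRel G.Adj] :
    ∃ U : Finset V, #U = coverNumber G ∧ ∀ e ∈ G.edgeFinset, ∃ v ∈ U, v ∈ e :=
  Nat.sInf_mem (s := {t | ∃ U : Finset V, #U = t ∧ ∀ e ∈ G.edgeFinset, ∃ v ∈ U, v ∈ e})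
    ⟨_, univ, rfl, fun e _ => ⟨e.out.1, mem_univ _, Sym2.out_fst_mem e⟩⟩

theorem stmt_18_general {V : Type*} [Fintype V] [DecidableEq V] (G : SimpleGraph V)
    [DecidableRel G.Adj] (k : ℕ) :
    maxEigenvalue ((tokenGraph G k).lapMatrix ℝ) ≤
      (G.edgeFinset.card : ℝ) + (coverNumber G : ℝ) := by
  obtain ⟨U, hUcard, hU⟩ := exists_cover_card_eq_coverNumber G
  refine maxEigenvalue_le_of_forall_dotProduct_le (by positivity) fun x => ?_
  set y := Function.extend Subtype.val x 0
  have hxy : x ⬝ᵥ x = ∑ s, y s ^ 2 := by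
    rw [Subtype.val_injective.sum_comp_extend_zero x (h := (· ^ 2)) (by simp)]
    simp only [dotProduct, sq]
  rw [← toLinearMap₂'_apply', SimpleGraph.lapMatrix_toLinearMap₂', hxy, ← hUcard]
  calc (∑ σ, ∑ τ, if (tokenGraph G k).Adj σ τ then (x σ - x τ) ^ 2 else 0) / 2
      ≤ (∑ u, ∑ v, if G.Adj u v then swapEnergy y u v else 0) / 2 := by
        gcongr
        exact sum_tokenGraph_adj_le G k x
    _ ≤ 2 * ((#G.edgeFinset + #U) * ∑ s, y s ^ 2) / 2 := by
        gcongr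
        exact sum_adj_le_of_cover G hU _ (swapEnergy_comm y) fun u N hu => sum_swapEnergy_le y hu
    _ = (#G.edgeFinset + #U) * ∑ s, y s ^ 2 := by ring

theorem stmt_18 {V : Type*} [Fintype V] [DecidableEq V] (G : SimpleGraph V)
    [DecidableRel G.Adj] (k : ℕ) (hk1 : 1 ≤ k) (hkn : k ≤ Fintype.card V) :
    maxEigenvalue ((tokenGraph G k).lapMatrix ℝ) ≤
      (G.edgeFinset.card : ℝ) + (coverNumber G : ℝ) :=
  stmt_18_general G k
end
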